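/- arXiv:1410.2266 — 5 statements merged into one kernel-verified Lean document; each statement's English description precedes it below -/
import Mathlib

section
/- There exists an absolute constant c > 0 with the following property. For every integer k ≥ 2, every integer n ≥ k, every ε ∈ (0, 1/2), every integer m with 1 ≤ m ≤ c·√k/ε², and every set A ⊆ [n]^m, it is not the case that both U_n^{⊗m}(A) ≥ 2/3 and q^{⊗m}(A) ≤ 1/3 for every probability distribution q on [n] with ‖q − U_n‖_{A_k} ≥ ε. In other words, Ω(√k/ε²) samples are information-theoretically necessary for testing identity to the uniform distribution under the A_k-distance. -/
open Finset ProbabilityTheory MeasureTheory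

/-- The probability mass that a function on `Fin n` assigns to the (0-indexed)
interval `[a, b)`. -/
noncomputable def intervalMass {n : ℕ} (q : Fin n → ℝ) (a b : ℕ) : ℝ :=
  ∑ j ∈ Finset.univ.filter (fun j : Fin n => a ≤ (j : ℕ) ∧ (j : ℕ) < b), q j

/-- `q` is a probability distribution on `[n]` (identified with `Fin n`). -/
noncomputable def IsDist {n : ℕ} (q : Fin n → ℝ) : Prop := (∀ i, 0 ≤ q i) ∧ ∑ i, q i = 1

/-- The `A_k` distance between `p` and `q` on `Fin n`: the supremum, over all partitions of
`Fin n` into `k` consecutive intervals (described by their monotone sequence of boundary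
points), of the sum of the discrepancies `|p(I) - q(I)|` over the intervals. -/
noncomputable def AkDist (n k : ℕ) (p q : Fin n → ℝ) : ℝ :=
  sSup { x : ℝ | ∃ b : Fin (k + 1) → ℕ, Monotone b ∧ b 0 = 0 ∧ b (Fin.last k) = n ∧
    x = ∑ i : Fin k,
      |intervalMass p (b i.castSucc) (b i.succ) - intervalMass q (b i.castSucc) (b i.succ)| }

/-- The `L1` distance between two functions on `Fin n`. -/
noncomputable def L1Dist {n : ℕ} (p q : Fin n → ℝ) : ℝ := ∑ i, |p i - q i|

/-- The `L2` distance between two functions on `Fin n`. -/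
noncomputable def L2Dist {n : ℕ} (p q : Fin n → ℝ) : ℝ := Real.sqrt (∑ i, (p i - q i) ^ 2)

/-- The uniform distribution on `Fin n`. -/
noncomputable def unif (n : ℕ) : Fin n → ℝ := fun _ => 1 / n

/-- The probability that the `m`-fold product measure `q^{⊗m}` assigns to a set
`A ⊆ [n]^m` of sample sequences. -/
noncomputable def prodProb {n m : ℕ} (q : Fin n → ℝ) (A : Finset (Fin m → Fin n)) : ℝ :=
  ∑ x ∈ A, ∏ j, q (x j)

/-- The reduced distribution of `q` w.r.t. the partition of `Fin n` into `ℓ` consecutive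
intervals of equal length `n / ℓ` (assuming `ℓ ∣ n`). -/
noncomputable def reducedDist {n : ℕ} (q : Fin n → ℝ) (ℓ : ℕ) : Fin ℓ → ℝ :=
  fun i => intervalMass q ((i : ℕ) * (n / ℓ)) (((i : ℕ) + 1) * (n / ℓ))

/-- `p` is a `t`-piecewise degree-`d` function on `Fin n`: there is a partition of `Fin n`
into `t` consecutive intervals on each of which `p` agrees with a real polynomial of degree
at most `d`. -/
noncomputable def IsPiecewisePoly {n : ℕ} (t d : ℕ) (p : Fin n → ℝ) : Prop :=
  ∃ b : Fin (t + 1) → ℕ, Monotone b ∧ b 0 = 0 ∧ b (Fin.last t) = n ∧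
    ∀ i : Fin t, ∃ P : Polynomial ℝ, P.degree ≤ (d : ℕ) ∧
      ∀ x : Fin n, b i.castSucc ≤ (x : ℕ) → (x : ℕ) < b i.succ → p x = P.eval ((x : ℕ) : ℝ)

/-- `q` is `k`-flat: there is a partition of `Fin n` into `k` consecutive intervals
on each of which `q` is constant. -/
noncomputable def IsKFlat {n : ℕ} (k : ℕ) (q : Fin n → ℝ) : Prop :=
  ∃ b : Fin (k + 1) → ℕ, Monotone b ∧ b 0 = 0 ∧ b (Fin.last k) = n ∧
    ∀ i : Fin k, ∃ c : ℝ, ∀ x : Fin n, b i.castSucc ≤ (x : ℕ) → (x : ℕ) < b i.succ → q x = c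

/-- The term `Discr(I)² / width(I)^{1/8}` for the interval `I = [a, b)` in `Fin n`, where
the discrepancy is `Discr(I) = |q(I) - U_n(I)|` and the width is `|I|/n` (relative to the
uniform distribution `U_n`). -/
noncomputable def ssTerm {n : ℕ} (q : Fin n → ℝ) (a b : ℕ) : ℝ :=
  |intervalMass q a b - ((b - a : ℕ) : ℝ) / n| ^ 2 / (((b - a : ℕ) : ℝ) / n) ^ ((1 : ℝ) / 8)

/-- The squared scale-sensitive-`L2` distance between `q` and the uniform distribution
on `Fin n`, at scale `1/k`: the supremum, over all partitions of `Fin n` into consecutive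
nonempty intervals each of width at most `1/k`, of `∑ Discr(I)² / width(I)^{1/8}`. -/
noncomputable def ssDistSq (n k : ℕ) (q : Fin n → ℝ) : ℝ :=
  sSup { x : ℝ | ∃ r : ℕ, ∃ b : Fin (r + 1) → ℕ, StrictMono b ∧ b 0 = 0 ∧ b (Fin.last r) = n ∧
    (∀ i : Fin r, ((b i.succ - b i.castSucc : ℕ) : ℝ) / n ≤ 1 / k) ∧
    x = ∑ i : Fin r, ssTerm q (b i.castSucc) (b i.succ) }
namespace AkLB

noncomputable def sgb (b : Bool) : ℝ := if b then 1 else -1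

noncomputable def sg {r : ℕ} (σ : Fin r → Bool) (j : ℕ) : ℝ :=
  if h : j < r then sgb (σ ⟨j, h⟩) else 0

noncomputable def vv {r : ℕ} (δ : ℝ) (σ : Fin r → Bool) (i : ℕ) : ℝ :=
  if i < 2*r then sg σ (i/2) * (if i % 2 = 0 then δ else -δ) else 0

noncomputable def ee (s : ℕ) {r : ℕ} (δ : ℝ) (σ : Fin r → Bool) (y : ℕ) : ℝ :=
  vv δ σ (y / s)

lemma abs_sgb (b : Bool) : |sgb b| = 1 := by cases b <;> simp [sgb]

lemma abs_sg_le {r : ℕ} (σ : Fin r → Bool) (j : ℕ) : |sg σ j| ≤ 1 := by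
  unfold sg; split
  · rw [abs_sgb]
  · simp

lemma abs_vv_le {r : ℕ} {δ : ℝ} (hδ : 0 ≤ δ) (σ : Fin r → Bool) (i : ℕ) :
    |vv δ σ i| ≤ δ := by
  unfold vv; split
  · rw [abs_mul]
    calc |sg σ (i/2)| * |if i % 2 = 0 then δ else -δ| ≤ 1 * δ := by
          apply mul_le_mul (abs_sg_le _ _) _ (abs_nonneg _) zero_le_one
          split <;> simp [abs_of_nonneg hδ, hδ]
      _ = δ := one_mul δ
  · simpa

lemma abs_vv_eq {r : ℕ} {δ : ℝ} (hδ : 0 ≤ δ) (σ : Fin r → Bool) {i : ℕ}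
    (hi : i < 2*r) : |vv δ σ i| = δ := by
  have h2 : i/2 < r := by omega
  unfold vv sg
  rw [if_pos hi, dif_pos h2, abs_mul, abs_sgb, one_mul]
  split <;> simp [abs_of_nonneg hδ]

lemma vv_even {r : ℕ} (δ : ℝ) (σ : Fin r → Bool) {j : ℕ} (hj : j < r) :
    vv δ σ (2*j) = sgb (σ ⟨j, hj⟩) * δ := by
  have h1 : 2*j < 2*r := by omega
  have h2 : (2*j) % 2 = 0 := by omega
  have h3 : (2*j) / 2 = j := by omega
  simp [vv, h1, h2, h3, sg, hj]

lemma vv_odd {r : ℕ} (δ : ℝ) (σ : Fin r → Bool) {j : ℕ} (hj : j < r) :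
    vv δ σ (2*j+1) = -(sgb (σ ⟨j, hj⟩) * δ) := by
  have h1 : 2*j+1 < 2*r := by omega
  have h2 : (2*j+1) % 2 = 1 := by omega
  have h3 : (2*j+1) / 2 = j := by omega
  simp [vv, h1, h2, h3, sg, hj, mul_neg]

lemma sum_Ico_div (F : ℕ → ℝ) {s : ℕ} (hs : 0 < s) (i : ℕ) :
    ∑ y ∈ Finset.Ico (i*s) ((i+1)*s), F (y/s) = s * F i := by
  have h : ∀ y ∈ Finset.Ico (i*s) ((i+1)*s), F (y/s) = F i := by
    intro y hy
    rw [Finset.mem_Ico] at hy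
    congr 1
    exact Nat.div_eq_of_lt_le hy.1 hy.2
  rw [Finset.sum_congr rfl h, Finset.sum_const, Nat.card_Ico]
  have : (i+1)*s - i*s = s := by ring_nf; omega
  rw [this, nsmul_eq_mul]

lemma sum_range_mul_div (F : ℕ → ℝ) {s : ℕ} (hs : 0 < s) (a : ℕ) :
    ∑ y ∈ Finset.range (a*s), F (y/s) = s * ∑ i ∈ Finset.range a, F i := by
  induction a with
  | zero => simp
  | succ a ih =>
    have h1 : a*s ≤ (a+1)*s := by nlinarith
    rw [Finset.range_eq_Ico, ← Finset.sum_Ico_consecutive _ (Nat.zero_le (a*s)) h1,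
      ← Finset.range_eq_Ico, ih, sum_Ico_div F hs a, Finset.sum_range_succ]
    ring

lemma sum_range_two_mul (g : ℕ → ℝ) (r : ℕ) :
    ∑ i ∈ Finset.range (2*r), g i = ∑ j ∈ Finset.range r, (g (2*j) + g (2*j+1)) := by
  induction r with
  | zero => simp
  | succ r ih =>
    have : 2*(r+1) = (2*r+1)+1 := by ring
    rw [this, Finset.sum_range_succ, Finset.sum_range_succ, ih, Finset.sum_range_succ, add_assoc]

lemma ee_eq_zero {s r : ℕ} {δ : ℝ} (σ : Fin r → Bool) (hs : 0 < s) {y : ℕ}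
    (hy : 2*r*s ≤ y) : ee s δ σ y = 0 := by
  have : 2*r ≤ y / s := (Nat.le_div_iff_mul_le hs).2 hy
  simp [ee, vv, Nat.not_lt.2 this]

lemma sum_range_ee {n s r : ℕ} {δ : ℝ} (σ : Fin r → Bool) (hs : 0 < s)
    (hrs : 2*r*s ≤ n) :
    ∑ y ∈ Finset.range n, ee s δ σ y = 0 := by
  rw [Finset.range_eq_Ico, ← Finset.sum_Ico_consecutive _ (Nat.zero_le (2*r*s)) hrs,
    ← Finset.range_eq_Ico]
  have h2 : ∑ y ∈ Finset.Ico (2*r*s) n, ee s δ σ y = 0 :=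
    Finset.sum_eq_zero fun y hy => ee_eq_zero σ hs (Finset.mem_Ico.1 hy).1
  rw [h2, add_zero]
  show ∑ y ∈ Finset.range (2*r*s), vv δ σ (y/s) = 0
  rw [sum_range_mul_div _ hs, sum_range_two_mul]
  have : ∀ j ∈ Finset.range r, vv δ σ (2*j) + vv δ σ (2*j+1) = 0 := by
    intro j hj
    rw [Finset.mem_range] at hj
    rw [vv_even δ σ hj, vv_odd δ σ hj]; ring
  rw [Finset.sum_congr rfl this]; simp

lemma sg_fin {r : ℕ} (σ : Fin r → Bool) (j : Fin r) : sg σ (j : ℕ) = sgb (σ j) := by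
  simp [sg, j.isLt]

lemma sum_sg_eq {r : ℕ} (σ σ' : Fin r → Bool) :
    ∑ j ∈ Finset.range r, sg σ j * sg σ' j = ∑ j : Fin r, sgb (σ j) * sgb (σ' j) := by
  rw [← Fin.sum_univ_eq_sum_range (fun j => sg σ j * sg σ' j) r]
  exact Finset.sum_congr rfl fun j _ => by rw [sg_fin, sg_fin]

lemma sum_range_ee_mul {n s r : ℕ} {δ : ℝ} (σ σ' : Fin r → Bool) (hs : 0 < s)
    (hrs : 2*r*s ≤ n) :
    ∑ y ∈ Finset.range n, ee s δ σ y * ee s δ σ' y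
      = 2*s*δ^2 * ∑ j : Fin r, sgb (σ j) * sgb (σ' j) := by
  rw [Finset.range_eq_Ico, ← Finset.sum_Ico_consecutive _ (Nat.zero_le (2*r*s)) hrs,
    ← Finset.range_eq_Ico]
  have h2 : ∑ y ∈ Finset.Ico (2*r*s) n, ee s δ σ y * ee s δ σ' y = 0 :=
    Finset.sum_eq_zero fun y hy => by
      rw [ee_eq_zero σ hs (Finset.mem_Ico.1 hy).1, zero_mul]
  rw [h2, add_zero]
  have h3 : ∑ y ∈ Finset.range (2*r*s), ee s δ σ y * ee s δ σ' y
      = ∑ y ∈ Finset.range (2*r*s), (fun i => vv δ σ i * vv δ σ' i) (y/s) :=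
    Finset.sum_congr rfl fun y _ => rfl
  rw [h3]
  have h3b := sum_range_mul_div (fun i => vv δ σ i * vv δ σ' i) hs (2*r)
  rw [h3b, sum_range_two_mul]
  have h4 : ∀ j ∈ Finset.range r,
      (fun i => vv δ σ i * vv δ σ' i) (2*j) + (fun i => vv δ σ i * vv δ σ' i) (2*j+1)
        = 2*δ^2 * (sg σ j * sg σ' j) := by
    intro j hj
    have hjr := Finset.mem_range.1 hj
    simp only
    rw [vv_even δ σ hjr, vv_odd δ σ hjr, vv_even δ σ' hjr, vv_odd δ σ' hjr]
    have : sg σ j = sgb (σ ⟨j, hjr⟩) := by simp [sg, hjr]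
    have h' : sg σ' j = sgb (σ' ⟨j, hjr⟩) := by simp [sg, hjr]
    rw [this, h']; ring
  rw [Finset.sum_congr rfl h4, ← Finset.mul_sum, sum_sg_eq]
  ring


lemma intervalMass_eq {n : ℕ} (G : ℕ → ℝ) {a b : ℕ} (hb : b ≤ n) :
    intervalMass (fun y : Fin n => G (y : ℕ)) a b = ∑ y ∈ Finset.Ico a b, G y := by
  unfold intervalMass
  rw [Finset.sum_filter]
  rw [Fin.sum_univ_eq_sum_range (fun y => if a ≤ y ∧ y < b then G y else 0) n]
  rw [← Finset.sum_filter]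
  congr 1
  ext y
  simp only [Finset.mem_filter, Finset.mem_range, Finset.mem_Ico]
  omega

lemma sum_prod_pi {m : ℕ} {α : Type*} [Fintype α] [DecidableEq α] (H : Fin m → α → ℝ) :
    ∑ x : Fin m → α, ∏ j, H j (x j) = ∏ j, ∑ y, H j y := by
  rw [Finset.prod_univ_sum, Fintype.piFinset_univ]

lemma cosh_bound {u : ℝ} (hu : |u| ≤ 1) :
    Real.exp u + Real.exp (-u) ≤ 2 * Real.exp (u^2) := by
  have h1 := Real.exp_bound hu (n := 2) (by norm_num)
  have h2 := Real.exp_bound (x := -u) (by rwa [abs_neg]) (n := 2) (by norm_num)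
  have e1 : ∑ m ∈ Finset.range 2, u ^ m / m.factorial = 1 + u := by
    simp [Finset.sum_range_succ]
  have e2 : ∑ m ∈ Finset.range 2, (-u) ^ m / m.factorial = 1 - u := by
    simp [Finset.sum_range_succ]; ring
  rw [e1] at h1; rw [e2] at h2
  have b1 : Real.exp u ≤ 1 + u + u^2 * (3/4) := by
    have := (abs_sub_le_iff.1 h1).1
    norm_num [Nat.factorial] at this; linarith
  have b2 : Real.exp (-u) ≤ 1 - u + u^2 * (3/4) := by
    have := (abs_sub_le_iff.1 h2).1
    rw [abs_neg] at this
    norm_num [Nat.factorial] at this; linarith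
  have hsq : |u|^2 = u^2 := sq_abs u
  have hexp : 1 + u^2 ≤ Real.exp (u^2) := by
    have := Real.add_one_le_exp (u^2); linarith
  nlinarith [sq_nonneg u]


end AkLB

set_option maxHeartbeats 2000000 in
/-- **Sample complexity lower bound for `A_k` identity testing.**
There is a universal constant `c > 0` such that for all `k ≥ 2`, `n ≥ k`, `ε ∈ (0,1/2)`, and
any `1 ≤ m ≤ c √k / ε²`, no test set `A ⊆ [n]^m` both accepts the uniform distribution with
probability `≥ 2/3` and rejects (accepts with probability `≤ 1/3`) every distribution `q`
with `‖q - U_n‖_{A_k} ≥ ε`. -/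
theorem identity_testing_Ak_lower_bound :
    ∃ c : ℝ, 0 < c ∧ ∀ (k n : ℕ) (ε : ℝ) (m : ℕ),
      2 ≤ k → k ≤ n → 0 < ε → ε < 1 / 2 → 1 ≤ m → (m : ℝ) ≤ c * Real.sqrt k / ε ^ 2 →
      ∀ A : Finset (Fin m → Fin n),
        ¬ (2 / 3 ≤ prodProb (unif n) A ∧
           ∀ q : Fin n → ℝ, IsDist q → ε ≤ AkDist n k q (unif n) → prodProb q A ≤ 1 / 3) := by
  classical
  refine ⟨1/100, by norm_num, ?_⟩
  intro k n ε m hk2 hkn hε0 hε12 hm1 hmc A hcon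
  obtain ⟨hU, hrej⟩ := hcon
  -- choose r and s
  obtain ⟨r, hr1, h2rk, hk3r, s, hs1, h2rs, h4rs⟩ :
      ∃ r, 1 ≤ r ∧ 2*r ≤ k ∧ k ≤ 3*r ∧ ∃ s, 1 ≤ s ∧ 2*r*s ≤ n ∧ n ≤ 4*r*s := by
    refine ⟨k/2, by omega, by omega, by omega, ?_⟩
    by_cases h : n ≤ 4*(k/2)
    · exact ⟨1, le_refl 1, by omega, by omega⟩
    · refine ⟨n/(2*(k/2)), ?_, ?_, ?_⟩
      · rw [Nat.one_le_div_iff (by omega)]; omega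
      · exact Nat.le.intro (Nat.div_add_mod n (2*(k/2)))
      · have hq := Nat.div_add_mod n (2*(k/2))
        have hmod := Nat.mod_lt n (show 0 < 2*(k/2) by omega)
        have hrw : 4*(k/2)*(n/(2*(k/2))) = 2*(2*(k/2)*(n/(2*(k/2)))) := by ring
        rw [hrw]
        generalize 2*(k/2)*(n/(2*(k/2))) = X at hq ⊢
        omega
  have hn2 : 2 ≤ n := le_trans hk2 hkn
  have hs0 : 0 < s := hs1
  have hN0 : (0:ℝ) < n := by exact_mod_cast (show 0 < n by omega)
  have hr0R : (0:ℝ) < r := by exact_mod_cast hr1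
  have hs0R : (0:ℝ) < s := by exact_mod_cast hs1
  have hrs0 : (0:ℝ) < 2*(r:ℝ)*s := by positivity
  have h4rsR : (n:ℝ) ≤ 4*(r:ℝ)*s := by exact_mod_cast h4rs
  have h2rsR : 2*(r:ℝ)*s ≤ (n:ℝ) := by exact_mod_cast h2rs
  set δ : ℝ := ε / (2*(r:ℝ)*s) with hδdef
  have hδ0 : 0 < δ := div_pos hε0 hrs0
  have hδn : δ ≤ 1/(n:ℝ) := by
    rw [hδdef, div_le_div_iff₀ hrs0 hN0]
    nlinarith
  set qf : (Fin r → Bool) → Fin n → ℝ :=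
    fun σ y => 1/(n:ℝ) + AkLB.ee s δ σ (y:ℕ) with hqf
  -- each qf σ is a probability distribution
  have hdist : ∀ σ, IsDist (qf σ) := by
    intro σ
    constructor
    · intro y
      have h1 : |AkLB.ee s δ σ (y:ℕ)| ≤ δ := AkLB.abs_vv_le hδ0.le σ _
      have h2 := abs_le.1 h1
      have : (0:ℝ) < 1/(n:ℝ) := by positivity
      simp only [hqf]
      linarith
    · simp only [hqf]
      rw [Finset.sum_add_distrib]
      have h1 : ∑ _y : Fin n, 1/(n:ℝ) = 1 := by
        rw [Finset.sum_const, Finset.card_univ, Fintype.card_fin, nsmul_eq_mul]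
        field_simp
      have h2 : ∑ y : Fin n, AkLB.ee s δ σ (y:ℕ) = 0 := by
        rw [Fin.sum_univ_eq_sum_range (fun y => AkLB.ee s δ σ y) n]
        exact AkLB.sum_range_ee σ hs0 h2rs
      rw [h1, h2, add_zero]
  -- interval mass difference is the sum of the perturbation
  have hIM : ∀ σ (a b' : ℕ), b' ≤ n →
      intervalMass (qf σ) a b' - intervalMass (unif n) a b'
        = ∑ y ∈ Finset.Ico a b', AkLB.ee s δ σ y := by
    intro σ a b' hb'
    have h1 := AkLB.intervalMass_eq (n := n) (fun z => 1/(n:ℝ) + AkLB.ee s δ σ z) hb' (a := a)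
    have h2 := AkLB.intervalMass_eq (n := n) (fun _ => 1/(n:ℝ)) hb' (a := a)
    have e1 : intervalMass (qf σ) a b' = ∑ y ∈ Finset.Ico a b', (1/(n:ℝ) + AkLB.ee s δ σ y) := h1
    have e2 : intervalMass (unif n) a b' = ∑ y ∈ Finset.Ico a b', 1/(n:ℝ) := h2
    rw [e1, e2, ← Finset.sum_sub_distrib]
    congr 1; ext y; ring
  -- AkDist lower bound
  have hAk : ∀ σ, ε ≤ AkDist n k (qf σ) (unif n) := by
    intro σ
    apply le_csSup
    · -- bounded above
      refine ⟨(k:ℝ) * ((∑ y, |qf σ y|) + (∑ y, |unif n y|)), ?_⟩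
      rintro x ⟨b, hbmono, hb0, hbl, rfl⟩
      have hbd : ∀ (p : Fin n → ℝ) (a b' : ℕ), |intervalMass p a b'| ≤ ∑ y, |p y| := by
        intro p a b'
        refine le_trans (Finset.abs_sum_le_sum_abs _ _) ?_
        exact Finset.sum_le_sum_of_subset_of_nonneg (Finset.filter_subset _ _)
          (fun y _ _ => abs_nonneg _)
      calc ∑ i : Fin k, |intervalMass (qf σ) (b i.castSucc) (b i.succ)
              - intervalMass (unif n) (b i.castSucc) (b i.succ)|
          ≤ ∑ _i : Fin k, ((∑ y, |qf σ y|) + (∑ y, |unif n y|)) := by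
            refine Finset.sum_le_sum fun i _ => ?_
            refine le_trans (abs_sub _ _) (add_le_add (hbd _ _ _) (hbd _ _ _))
        _ = (k:ℝ) * ((∑ y, |qf σ y|) + (∑ y, |unif n y|)) := by
            rw [Finset.sum_const, Finset.card_univ, Fintype.card_fin, nsmul_eq_mul]
    · -- the witness partition
      refine ⟨fun i => if (i:ℕ) < 2*r then (i:ℕ)*s else n, ?_, ?_, ?_, ?_⟩
      · intro i j hij
        by_cases hj : (j:ℕ) < 2*r
        · have hi : (i:ℕ) < 2*r := lt_of_le_of_lt hij hj
          simp only [if_pos hi, if_pos hj]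
          exact Nat.mul_le_mul_right s hij
        · by_cases hi : (i:ℕ) < 2*r
          · simp only [if_pos hi, if_neg hj]
            calc (i:ℕ)*s ≤ (2*r)*s := Nat.mul_le_mul_right s hi.le
              _ ≤ n := h2rs
          · simp only [if_neg hi, if_neg hj]; exact le_refl n
      · simp only [Fin.val_zero, if_pos (by omega : 0 < 2*r), Nat.zero_mul]
      · simp only [Fin.val_last, if_neg (by omega : ¬ k < 2*r)]
      · -- ε equals the discrepancy sum
        simp only [Fin.coe_castSucc, Fin.val_succ]
        have hterm : ∀ i : Fin k,
            |intervalMass (qf σ) (if ((i:ℕ)) < 2*r then (i:ℕ)*s else n)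
                (if ((i:ℕ)+1) < 2*r then ((i:ℕ)+1)*s else n)
              - intervalMass (unif n) (if ((i:ℕ)) < 2*r then (i:ℕ)*s else n)
                (if ((i:ℕ)+1) < 2*r then ((i:ℕ)+1)*s else n)|
            = if (i:ℕ) < 2*r then (s:ℝ)*δ else 0 := by
          intro i
          by_cases h1 : (i:ℕ)+1 < 2*r
          · have h0 : (i:ℕ) < 2*r := by omega
            have hble : ((i:ℕ)+1)*s ≤ n :=
              le_trans (Nat.mul_le_mul_right s h1.le) h2rs
            rw [if_pos h0, if_pos h1, if_pos h0, hIM σ _ _ hble]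
            have hsum := AkLB.sum_Ico_div (fun z => AkLB.vv δ σ z) hs0 (i:ℕ)
            rw [show (∑ y ∈ Finset.Ico ((i:ℕ)*s) (((i:ℕ)+1)*s), AkLB.ee s δ σ y)
                = (s:ℝ) * AkLB.vv δ σ (i:ℕ) from hsum]
            rw [abs_mul, abs_of_nonneg hs0R.le, AkLB.abs_vv_eq hδ0.le σ h0]
          · by_cases h0 : (i:ℕ) < 2*r
            · have h1e : (i:ℕ)+1 = 2*r := by omega
              rw [if_pos h0, if_neg h1, if_pos h0, hIM σ _ _ (le_refl n)]
              have hle1 : (i:ℕ)*s ≤ 2*r*s := Nat.mul_le_mul_right s h0.le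
              rw [← Finset.sum_Ico_consecutive (fun y => AkLB.ee s δ σ y) hle1 h2rs]
              have hz : ∑ y ∈ Finset.Ico (2*r*s) n, AkLB.ee s δ σ y = 0 :=
                Finset.sum_eq_zero fun y hy =>
                  AkLB.ee_eq_zero σ hs0 (Finset.mem_Ico.1 hy).1
              rw [hz, add_zero]
              have h2e : 2*r*s = ((i:ℕ)+1)*s := by rw [← h1e]
              rw [h2e]
              have hsum := AkLB.sum_Ico_div (fun z => AkLB.vv δ σ z) hs0 (i:ℕ)
              rw [show (∑ y ∈ Finset.Ico ((i:ℕ)*s) (((i:ℕ)+1)*s), AkLB.ee s δ σ y)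
                  = (s:ℝ) * AkLB.vv δ σ (i:ℕ) from hsum]
              rw [abs_mul, abs_of_nonneg hs0R.le, AkLB.abs_vv_eq hδ0.le σ h0]
            · rw [if_neg h0, if_neg h1, if_neg h0, hIM σ _ _ (le_refl n)]
              simp
        rw [Finset.sum_congr rfl (fun i _ => hterm i)]
        have hsum2 : ∑ i : Fin k, (if (i:ℕ) < 2*r then (s:ℝ)*δ else 0)
            = ((2*r : ℕ) : ℝ) * ((s:ℝ)*δ) := by
          rw [Fin.sum_univ_eq_sum_range (fun i => if i < 2*r then (s:ℝ)*δ else 0) k]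
          rw [Finset.range_eq_Ico,
            ← Finset.sum_Ico_consecutive _ (Nat.zero_le (2*r)) h2rk,
            ← Finset.range_eq_Ico]
          have ha : ∑ i ∈ Finset.range (2*r), (if i < 2*r then (s:ℝ)*δ else 0)
              = ((2*r : ℕ) : ℝ) * ((s:ℝ)*δ) := by
            rw [Finset.sum_congr rfl (fun i hi => if_pos (Finset.mem_range.1 hi)),
              Finset.sum_const, Finset.card_range, nsmul_eq_mul]
          have hb : ∑ i ∈ Finset.Ico (2*r) k, (if i < 2*r then (s:ℝ)*δ else 0) = 0 :=
            Finset.sum_eq_zero fun i hi => if_neg (by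
              have := (Finset.mem_Ico.1 hi).1; omega)
          rw [ha, hb, add_zero]
        rw [hsum2, hδdef]
        push_cast
        field_simp
  -- all alternative distributions are rejected
  have hP : ∀ σ, prodProb (qf σ) A ≤ 1/3 := fun σ => hrej (qf σ) (hdist σ) (hAk σ)
  -- the main chi-square computation
  -- ==== the χ² computation ====
  have hNm0 : (0:ℝ) < (n:ℝ)^m := by positivity
  set t : ℝ := 2*(n:ℝ)*(s:ℝ)*δ^2 with htdef
  have hsgabs : ∀ (σ σ' : Fin r → Bool),
      |∑ j : Fin r, AkLB.sgb (σ j) * AkLB.sgb (σ' j)| ≤ (r:ℝ) := by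
    intro σ σ'
    refine le_trans (Finset.abs_sum_le_sum_abs _ _) ?_
    have h1 : ∀ j : Fin r, |AkLB.sgb (σ j) * AkLB.sgb (σ' j)| = 1 := fun j => by
      rw [abs_mul, AkLB.abs_sgb, AkLB.abs_sgb, one_mul]
    rw [Finset.sum_congr rfl fun j _ => h1 j, Finset.sum_const, Finset.card_univ,
      Fintype.card_fin, nsmul_eq_mul, mul_one]
  have hIP : ∀ (σ σ' : Fin r → Bool),
      (n:ℝ) * ∑ y : Fin n, qf σ y * qf σ' y
        = 1 + t * ∑ j : Fin r, AkLB.sgb (σ j) * AkLB.sgb (σ' j) := by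
    intro σ σ'
    have hexp : ∀ y : Fin n, qf σ y * qf σ' y
        = 1/(n:ℝ)*(1/(n:ℝ)) + ((1/(n:ℝ))*AkLB.ee s δ σ' (y:ℕ)
          + ((1/(n:ℝ))*AkLB.ee s δ σ (y:ℕ)
          + AkLB.ee s δ σ (y:ℕ) * AkLB.ee s δ σ' (y:ℕ))) := by
      intro y; simp only [hqf]; ring
    rw [Finset.sum_congr rfl fun y _ => hexp y]
    rw [Finset.sum_add_distrib, Finset.sum_add_distrib, Finset.sum_add_distrib]
    have e2 : ∑ y : Fin n, (1/(n:ℝ))*AkLB.ee s δ σ' (y:ℕ)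
        = (1/(n:ℝ)) * ∑ y : Fin n, AkLB.ee s δ σ' (y:ℕ) := (Finset.mul_sum _ _ _).symm
    have e3 : ∑ y : Fin n, (1/(n:ℝ))*AkLB.ee s δ σ (y:ℕ)
        = (1/(n:ℝ)) * ∑ y : Fin n, AkLB.ee s δ σ (y:ℕ) := (Finset.mul_sum _ _ _).symm
    rw [e2, e3]
    have hz : ∑ y : Fin n, AkLB.ee s δ σ (y:ℕ) = 0 := by
      rw [Fin.sum_univ_eq_sum_range (fun y => AkLB.ee s δ σ y) n]
      exact AkLB.sum_range_ee σ hs0 h2rs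
    have hz' : ∑ y : Fin n, AkLB.ee s δ σ' (y:ℕ) = 0 := by
      rw [Fin.sum_univ_eq_sum_range (fun y => AkLB.ee s δ σ' y) n]
      exact AkLB.sum_range_ee σ' hs0 h2rs
    have hee : ∑ y : Fin n, AkLB.ee s δ σ (y:ℕ) * AkLB.ee s δ σ' (y:ℕ)
        = 2*(s:ℝ)*δ^2 * ∑ j : Fin r, AkLB.sgb (σ j) * AkLB.sgb (σ' j) := by
      rw [Fin.sum_univ_eq_sum_range (fun y => AkLB.ee s δ σ y * AkLB.ee s δ σ' y) n]
      exact AkLB.sum_range_ee_mul σ σ' hs0 h2rs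
    have hc : ∑ _y : Fin n, 1/(n:ℝ)*(1/(n:ℝ)) = (n:ℝ) * (1/(n:ℝ)*(1/(n:ℝ))) := by
      rw [Finset.sum_const, Finset.card_univ, Fintype.card_fin, nsmul_eq_mul]
    rw [hz, hz', hee, hc, htdef]
    field_simp
    ring
  have hprod1 : ∀ σ, ∑ x : Fin m → Fin n, ∏ j, qf σ (x j) = 1 := by
    intro σ
    rw [AkLB.sum_prod_pi (fun _ : Fin m => qf σ)]
    simp only [(hdist σ).2, Finset.prod_const_one]
  have hprod2 : ∀ σ σ', ∑ x : Fin m → Fin n, (∏ j, qf σ (x j)) * (∏ j, qf σ' (x j))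
      = (∑ y : Fin n, qf σ y * qf σ' y)^m := by
    intro σ σ'
    have h1 : ∀ x : Fin m → Fin n, (∏ j, qf σ (x j)) * (∏ j, qf σ' (x j))
        = ∏ j, (qf σ (x j) * qf σ' (x j)) := fun x => (Finset.prod_mul_distrib).symm
    rw [Finset.sum_congr rfl fun x _ => h1 x]
    rw [AkLB.sum_prod_pi (fun _ : Fin m => fun y => qf σ y * qf σ' y)]
    rw [Finset.prod_const, Finset.card_univ, Fintype.card_fin]
  have hcard : (Fintype.card (Fin m → Fin n) : ℝ) = (n:ℝ)^m := by
    rw [Fintype.card_fun, Fintype.card_fin, Fintype.card_fin]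
    push_cast
    ring
  have hcardσ : (Fintype.card (Fin r → Bool) : ℝ) = (2:ℝ)^r := by
    rw [Fintype.card_fun, Fintype.card_bool, Fintype.card_fin]
    push_cast
    ring
  set w : ℝ := (1/(n:ℝ))^m with hwdef
  have hw0 : 0 ≤ w := by rw [hwdef]; positivity
  have hw1 : (n:ℝ)^m * w = 1 := by
    have hh : (n:ℝ) * (1/(n:ℝ)) = 1 := by field_simp
    rw [hwdef, ← mul_pow, hh, one_pow]
  have hR0 : (0:ℝ) < 2^r := by positivity
  set f : (Fin m → Fin n) → ℝ :=
    fun x => (∑ σ : Fin r → Bool, ∏ j, qf σ (x j))/(2^r : ℝ) - w with hfdef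
  -- the average over σ of the accepted mass differs a lot from uniform
  have hAf : ∑ x ∈ A, f x ≤ -(1/3) := by
    have h1 : ∑ x ∈ A, f x
        = (∑ σ : Fin r → Bool, prodProb (qf σ) A)/(2^r:ℝ) - prodProb (unif n) A := by
      simp only [hfdef]
      rw [Finset.sum_sub_distrib]
      congr 1
      · rw [← Finset.sum_div]
        congr 1
        rw [Finset.sum_comm]
        rfl
      · rw [prodProb]
        have : ∀ x : Fin m → Fin n, (∏ j, unif n (x j)) = w := by
          intro x
          rw [hwdef]
          simp [unif, Finset.prod_const, Finset.card_univ]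
        rw [Finset.sum_congr rfl fun x _ => this x]
    rw [h1]
    have h2 : ∑ σ : Fin r → Bool, prodProb (qf σ) A ≤ (2^r : ℝ) * (1/3) := by
      calc ∑ σ : Fin r → Bool, prodProb (qf σ) A
          ≤ ∑ _σ : Fin r → Bool, (1/3 : ℝ) := Finset.sum_le_sum fun σ _ => hP σ
        _ = (2^r:ℝ)*(1/3) := by
            rw [Finset.sum_const, Finset.card_univ, nsmul_eq_mul, hcardσ]
    have h3 : (∑ σ : Fin r → Bool, prodProb (qf σ) A)/(2^r:ℝ) ≤ 1/3 := by
      rw [div_le_iff₀ hR0]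
      linarith
    linarith
  have hZ13 : (1:ℝ)/3 ≤ ∑ x : Fin m → Fin n, |f x| := by
    have h1 : ∑ x ∈ A, |f x| ≤ ∑ x : Fin m → Fin n, |f x| :=
      Finset.sum_le_sum_of_subset_of_nonneg (Finset.subset_univ A) (fun x _ _ => abs_nonneg _)
    have h2 : (1:ℝ)/3 ≤ |∑ x ∈ A, f x| := by
      calc (1:ℝ)/3 ≤ -(∑ x ∈ A, f x) := by linarith
        _ ≤ |∑ x ∈ A, f x| := neg_le_abs _
    exact le_trans (le_trans h2 (Finset.abs_sum_le_sum_abs _ _)) h1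
  -- Cauchy-Schwarz
  have hCS : (∑ x : Fin m → Fin n, |f x|)^2 ≤ ∑ x : Fin m → Fin n, (n:ℝ)^m * (f x)^2 := by
    have hkey : ∀ x, |f x| = (|f x| * Real.sqrt ((n:ℝ)^m)) * Real.sqrt w := by
      intro x
      rw [mul_assoc, ← Real.sqrt_mul (by positivity : (0:ℝ) ≤ (n:ℝ)^m), hw1,
        Real.sqrt_one, mul_one]
    calc (∑ x : Fin m → Fin n, |f x|)^2
        = (∑ x : Fin m → Fin n, (|f x| * Real.sqrt ((n:ℝ)^m)) * Real.sqrt w)^2 := by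
          rw [Finset.sum_congr rfl fun x _ => hkey x]
      _ ≤ (∑ x : Fin m → Fin n, (|f x| * Real.sqrt ((n:ℝ)^m))^2)
            * (∑ _x : Fin m → Fin n, (Real.sqrt w)^2) :=
          Finset.sum_mul_sq_le_sq_mul_sq _ _ _
      _ = (∑ x : Fin m → Fin n, (n:ℝ)^m * (f x)^2) * (∑ _x : Fin m → Fin n, w) := by
          congr 1
          · refine Finset.sum_congr rfl fun x _ => ?_
            rw [mul_pow, Real.sq_sqrt (by positivity : (0:ℝ) ≤ (n:ℝ)^m), sq_abs]
            ring
          · exact Finset.sum_congr rfl fun x _ => Real.sq_sqrt hw0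
      _ = (∑ x : Fin m → Fin n, (n:ℝ)^m * (f x)^2) * 1 := by
          rw [Finset.sum_const, Finset.card_univ, nsmul_eq_mul, hcard, hw1]
      _ = ∑ x : Fin m → Fin n, (n:ℝ)^m * (f x)^2 := mul_one _
  -- expanding the χ² quantity
  have hchi : ∑ x : Fin m → Fin n, (n:ℝ)^m * (f x)^2
      = (∑ σ : Fin r → Bool, ∑ σ' : Fin r → Bool,
          (1 + t * ∑ j : Fin r, AkLB.sgb (σ j) * AkLB.sgb (σ' j))^m)/(2^r:ℝ)^2 - 1 := by
    have hx : ∀ x : Fin m → Fin n, (n:ℝ)^m * (f x)^2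
        = (n:ℝ)^m * (∑ σ : Fin r → Bool, ∏ j, qf σ (x j))^2/(2^r:ℝ)^2
          - 2*((n:ℝ)^m*w)*((∑ σ : Fin r → Bool, ∏ j, qf σ (x j))/(2^r:ℝ))
          + (n:ℝ)^m*w^2 := by
      intro x
      simp only [hfdef]
      field_simp
      ring
    rw [Finset.sum_congr rfl fun x _ => hx x]
    rw [Finset.sum_add_distrib, Finset.sum_sub_distrib]
    have h3 : ∑ _x : Fin m → Fin n, (n:ℝ)^m*w^2 = 1 := by
      rw [Finset.sum_const, Finset.card_univ, nsmul_eq_mul, hcard]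
      calc (n:ℝ)^m * ((n:ℝ)^m*w^2) = ((n:ℝ)^m*w)*((n:ℝ)^m*w) := by ring
        _ = 1 := by rw [hw1, one_mul]
    have h2 : ∑ x : Fin m → Fin n,
        2*((n:ℝ)^m*w)*((∑ σ : Fin r → Bool, ∏ j, qf σ (x j))/(2^r:ℝ)) = 2 := by
      rw [hw1]
      have : ∑ x : Fin m → Fin n,
          2*1*((∑ σ : Fin r → Bool, ∏ j, qf σ (x j))/(2^r:ℝ))
          = (2/(2^r:ℝ)) * ∑ x : Fin m → Fin n, ∑ σ : Fin r → Bool, ∏ j, qf σ (x j) := by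
        rw [Finset.mul_sum]
        refine Finset.sum_congr rfl fun x _ => ?_
        ring
      rw [this, Finset.sum_comm]
      rw [Finset.sum_congr rfl fun σ _ => hprod1 σ]
      rw [Finset.sum_const, Finset.card_univ, nsmul_eq_mul, hcardσ, mul_one]
      field_simp
    have h1 : ∑ x : Fin m → Fin n,
        (n:ℝ)^m * (∑ σ : Fin r → Bool, ∏ j, qf σ (x j))^2/(2^r:ℝ)^2
        = (∑ σ : Fin r → Bool, ∑ σ' : Fin r → Bool,
            (1 + t * ∑ j : Fin r, AkLB.sgb (σ j) * AkLB.sgb (σ' j))^m)/(2^r:ℝ)^2 := by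
      rw [← Finset.sum_div]
      congr 1
      have hsq : ∀ x : Fin m → Fin n,
          (n:ℝ)^m * (∑ σ : Fin r → Bool, ∏ j, qf σ (x j))^2
          = ∑ σ : Fin r → Bool, ∑ σ' : Fin r → Bool,
              (n:ℝ)^m * ((∏ j, qf σ (x j)) * (∏ j, qf σ' (x j))) := by
        intro x
        rw [sq, Finset.sum_mul_sum]
        rw [Finset.mul_sum]
        refine Finset.sum_congr rfl fun σ _ => ?_
        rw [Finset.mul_sum]
      rw [Finset.sum_congr rfl fun x _ => hsq x]
      rw [Finset.sum_comm]
      refine Finset.sum_congr rfl fun σ _ => ?_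
      rw [Finset.sum_comm]
      refine Finset.sum_congr rfl fun σ' _ => ?_
      rw [← Finset.mul_sum, hprod2 σ σ', ← mul_pow, hIP σ σ']
    rw [h1, h2, h3]
    ring
  -- pointwise exponential bound
  have hεsq : 2*ε^2 < 1/2 := by
    have h1 : ε*ε < (1/2)*(1/2) := mul_lt_mul'' hε12 hε12 hε0.le hε0.le
    have h2 : ε^2 = ε*ε := sq ε
    linarith
  have ht0 : 0 < t := by
    rw [htdef]
    exact mul_pos (by positivity) (pow_pos hδ0 2)
  have htr : t * (r:ℝ) ≤ 2*ε^2 := by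
    have expand : t * (r:ℝ) = (n:ℝ)*ε^2/(2*(r:ℝ)*s) := by
      rw [htdef, hδdef]
      field_simp
    rw [expand, div_le_iff₀ hrs0]
    nlinarith [mul_le_mul_of_nonneg_right h4rsR (sq_nonneg ε)]
  have htr' : t ≤ 2*ε^2/(r:ℝ) := by rw [le_div_iff₀ hr0R]; exact htr
  have hmt0 : 0 ≤ (m:ℝ)*t := by positivity
  have hmtle : (m:ℝ)*t ≤ (1/50)*Real.sqrt k/(r:ℝ) := by
    have h2 : (m:ℝ)*t ≤ ((1/100)*Real.sqrt k/ε^2) * (2*ε^2/(r:ℝ)) := by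
      apply mul_le_mul hmc htr' ht0.le ?_
      have : (0:ℝ) ≤ Real.sqrt k := Real.sqrt_nonneg _
      positivity
    have h3 : ((1/100)*Real.sqrt k/ε^2) * (2*ε^2/(r:ℝ)) = (1/50)*Real.sqrt k/(r:ℝ) := by
      field_simp
      ring
    rw [h3] at h2
    exact h2
  have hsqk : Real.sqrt k ≤ (k:ℝ) := by
    have h1 : (k:ℝ) ≤ ((k:ℝ))^2 := by nlinarith [show (2:ℝ) ≤ (k:ℝ) by exact_mod_cast hk2]
    calc Real.sqrt k ≤ Real.sqrt ((k:ℝ)^2) := Real.sqrt_le_sqrt h1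
      _ = (k:ℝ) := Real.sqrt_sq (by positivity)
  have hkr : (k:ℝ) ≤ 3*(r:ℝ) := by exact_mod_cast hk3r
  have hmt1 : (m:ℝ)*t ≤ 1 := by
    refine le_trans hmtle ?_
    rw [div_le_one hr0R]
    nlinarith
  have hrmt : (r:ℝ)*((m:ℝ)*t)^2 ≤ 3/2500 := by
    have h1 : ((m:ℝ)*t)^2 ≤ ((1/50)*Real.sqrt k/(r:ℝ))^2 := pow_le_pow_left₀ hmt0 hmtle 2
    have h2 : ((1/50)*Real.sqrt k/(r:ℝ))^2 = (1/2500)*(k:ℝ)/(r:ℝ)^2 := by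
      rw [div_pow, mul_pow, Real.sq_sqrt (by positivity : (0:ℝ) ≤ (k:ℝ))]
      norm_num
    have h3 : (r:ℝ)*((m:ℝ)*t)^2 ≤ (r:ℝ)*((1/2500)*(k:ℝ)/(r:ℝ)^2) :=
      mul_le_mul_of_nonneg_left (h1.trans h2.le) hr0R.le
    refine le_trans h3 ?_
    have h4 : (r:ℝ)*((1/2500)*(k:ℝ)/(r:ℝ)^2) = (1/2500)*((k:ℝ)/(r:ℝ)) := by
      field_simp
    rw [h4]
    have h5 : (k:ℝ)/(r:ℝ) ≤ 3 := by rw [div_le_iff₀ hr0R]; linarith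
    linarith
  have hps : ∀ σ σ' : Fin r → Bool,
      (1 + t * ∑ j : Fin r, AkLB.sgb (σ j) * AkLB.sgb (σ' j))^m
      ≤ Real.exp ((m:ℝ)*t*(∑ j : Fin r, AkLB.sgb (σ j) * AkLB.sgb (σ' j))) := by
    intro σ σ'
    have hSb := hsgabs σ σ'
    have hSlow := (abs_le.1 hSb).1
    have hpos : 0 ≤ 1 + t*(∑ j : Fin r, AkLB.sgb (σ j) * AkLB.sgb (σ' j)) := by
      nlinarith [htr, hεsq, ht0]
    have hle : 1 + t*(∑ j : Fin r, AkLB.sgb (σ j) * AkLB.sgb (σ' j))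
        ≤ Real.exp (t*(∑ j : Fin r, AkLB.sgb (σ j) * AkLB.sgb (σ' j))) := by
      linarith [Real.add_one_le_exp (t*(∑ j : Fin r, AkLB.sgb (σ j) * AkLB.sgb (σ' j)))]
    calc (1 + t*(∑ j : Fin r, AkLB.sgb (σ j) * AkLB.sgb (σ' j)))^m
        ≤ (Real.exp (t*(∑ j : Fin r, AkLB.sgb (σ j) * AkLB.sgb (σ' j))))^m :=
          pow_le_pow_left₀ hpos hle m
      _ = Real.exp ((m:ℝ)*(t*(∑ j : Fin r, AkLB.sgb (σ j) * AkLB.sgb (σ' j)))) :=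
          (Real.exp_nat_mul _ m).symm
      _ = Real.exp ((m:ℝ)*t*(∑ j : Fin r, AkLB.sgb (σ j) * AkLB.sgb (σ' j))) := by
          congr 1
          rw [htdef]
          ring
  -- factorizing the double sum of exponentials
  have hdouble : ∑ σ : Fin r → Bool, ∑ σ' : Fin r → Bool,
      Real.exp ((m:ℝ)*t*(∑ j : Fin r, AkLB.sgb (σ j) * AkLB.sgb (σ' j)))
      = (2:ℝ)^r * (Real.exp ((m:ℝ)*t) + Real.exp (-((m:ℝ)*t)))^r := by
    have hinner : ∀ σ : Fin r → Bool, ∑ σ' : Fin r → Bool,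
        Real.exp ((m:ℝ)*t*(∑ j : Fin r, AkLB.sgb (σ j) * AkLB.sgb (σ' j)))
        = (Real.exp ((m:ℝ)*t) + Real.exp (-((m:ℝ)*t)))^r := by
      intro σ
      have hsplit : ∀ σ' : Fin r → Bool,
          Real.exp ((m:ℝ)*t*(∑ j : Fin r, AkLB.sgb (σ j) * AkLB.sgb (σ' j)))
          = ∏ j : Fin r, Real.exp ((m:ℝ)*t*(AkLB.sgb (σ j) * AkLB.sgb (σ' j))) := by
        intro σ'
        rw [← Real.exp_sum]
        congr 1
        rw [Finset.mul_sum]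
      rw [Finset.sum_congr rfl fun σ' _ => hsplit σ']
      rw [AkLB.sum_prod_pi (fun (j : Fin r) (b : Bool) =>
        Real.exp ((m:ℝ)*t*(AkLB.sgb (σ j) * AkLB.sgb b)))]
      have hrow : ∀ j : Fin r,
          ∑ b : Bool, Real.exp ((m:ℝ)*t*(AkLB.sgb (σ j) * AkLB.sgb b))
          = Real.exp ((m:ℝ)*t) + Real.exp (-((m:ℝ)*t)) := by
        intro j
        rw [Fintype.sum_bool]
        have hT : AkLB.sgb true = 1 := rfl
        have hF : AkLB.sgb false = -1 := rfl
        cases h : σ j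
        · rw [hF, hT]
          rw [show (m:ℝ)*t*(-1*1) = -((m:ℝ)*t) by ring,
            show (m:ℝ)*t*(-1*-1) = (m:ℝ)*t by ring]
          ring
        · rw [hT, hF]
          rw [show (m:ℝ)*t*(1*1) = (m:ℝ)*t by ring,
            show (m:ℝ)*t*(1*-1) = -((m:ℝ)*t) by ring]
      rw [Finset.prod_congr rfl fun j _ => hrow j, Finset.prod_const, Finset.card_univ,
        Fintype.card_fin]
    rw [Finset.sum_congr rfl fun σ _ => hinner σ, Finset.sum_const, Finset.card_univ,
      nsmul_eq_mul, hcardσ]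
  -- assembling the bound
  have habs_mt : |(m:ℝ)*t| ≤ 1 := abs_le.2 ⟨by linarith, hmt1⟩
  have hfinal : ∑ σ : Fin r → Bool, ∑ σ' : Fin r → Bool,
      (1 + t * ∑ j : Fin r, AkLB.sgb (σ j) * AkLB.sgb (σ' j))^m
      ≤ (2^r:ℝ)^2 * Real.exp ((r:ℝ)*((m:ℝ)*t)^2) := by
    calc ∑ σ : Fin r → Bool, ∑ σ' : Fin r → Bool,
        (1 + t * ∑ j : Fin r, AkLB.sgb (σ j) * AkLB.sgb (σ' j))^m
        ≤ ∑ σ : Fin r → Bool, ∑ σ' : Fin r → Bool,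
            Real.exp ((m:ℝ)*t*(∑ j : Fin r, AkLB.sgb (σ j) * AkLB.sgb (σ' j))) :=
          Finset.sum_le_sum fun σ _ => Finset.sum_le_sum fun σ' _ => hps σ σ'
      _ = (2:ℝ)^r * (Real.exp ((m:ℝ)*t) + Real.exp (-((m:ℝ)*t)))^r := hdouble
      _ ≤ (2:ℝ)^r * (2*Real.exp (((m:ℝ)*t)^2))^r := by
          refine mul_le_mul_of_nonneg_left ?_ (by positivity)
          exact pow_le_pow_left₀ (by positivity) (AkLB.cosh_bound habs_mt) r
      _ = (2^r:ℝ)^2 * Real.exp ((r:ℝ)*((m:ℝ)*t)^2) := by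
          rw [mul_pow, ← Real.exp_nat_mul]
          ring
  -- final numeric contradiction
  have hchile : ∑ x : Fin m → Fin n, (n:ℝ)^m * (f x)^2
      ≤ Real.exp ((r:ℝ)*((m:ℝ)*t)^2) - 1 := by
    rw [hchi]
    have hdiv : (∑ σ : Fin r → Bool, ∑ σ' : Fin r → Bool,
        (1 + t * ∑ j : Fin r, AkLB.sgb (σ j) * AkLB.sgb (σ' j))^m)/(2^r:ℝ)^2
        ≤ Real.exp ((r:ℝ)*((m:ℝ)*t)^2) := by
      rw [div_le_iff₀ (by positivity : (0:ℝ) < (2^r:ℝ)^2)]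
      calc _ ≤ (2^r:ℝ)^2 * Real.exp ((r:ℝ)*((m:ℝ)*t)^2) := hfinal
        _ = Real.exp ((r:ℝ)*((m:ℝ)*t)^2) * (2^r:ℝ)^2 := by ring
    linarith
  have hexpb : Real.exp ((r:ℝ)*((m:ℝ)*t)^2) ≤ 1/(1 - 3/2500) := by
    refine le_trans (Real.exp_le_exp.2 hrmt) ?_
    exact Real.exp_bound_div_one_sub_of_interval (by norm_num) (by norm_num)
  have hZsq : (1/3:ℝ)^2 ≤ (∑ x : Fin m → Fin n, |f x|)^2 :=
    pow_le_pow_left₀ (by norm_num) hZ13 2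
  have : (1/9:ℝ) ≤ 1/(1-3/2500) - 1 := by
    have := le_trans (le_trans hZsq hCS) (le_trans hchile (by linarith))
    linarith [this]
  norm_num at this
end

section
/- If p and q are both t-piecewise degree-d probability distributions on [n], and k = 2t(d+1) satisfies 2 ≤ k ≤ n, then ‖p − q‖_{A_k} = ‖p − q‖_1. -/
open Finset ProbabilityTheory MeasureTheory

open Polynomial

/-! The difference `p - q` agrees with a polynomial of degree at most `d` on each of the at most
`2t` cells cut out by the breakpoints of `p` and `q`. Cutting each cell once more just above
every real root of its polynomial gives, by the intermediate value theorem, at most `2t(d+1)`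
intervals on which `p - q` has constant sign. Over such a partition the `A_k` sum equals
`∑ |p i - q i|`, and by the triangle inequality no partition gives more. -/

section IntervalMass

variable {n : ℕ}

lemma intervalMass_add (f : Fin n → ℝ) {a b c : ℕ} (hab : a ≤ b) (hbc : b ≤ c) :
    intervalMass f a b + intervalMass f b c = intervalMass f a c := by
  rw [intervalMass, intervalMass, intervalMass, ← sum_union]
  · congr 1
    ext j
    simp only [mem_union, mem_filter, mem_univ, true_and]
    omega
  · exact disjoint_filter.2 fun j _ hj hj' => by omega

lemma sum_intervalMass_of_monotone (f : Fin n → ℝ) {k : ℕ} {b : Fin (k + 1) → ℕ}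
    (hb : Monotone b) :
    ∑ i : Fin k, intervalMass f (b i.castSucc) (b i.succ) =
      intervalMass f (b 0) (b (Fin.last k)) := by
  induction k with
  | zero =>
    refine (sum_eq_zero fun j hj => ?_).symm
    simp only [Fin.last_zero, mem_filter] at hj
    omega
  | succ k ih =>
    have := ih (b := b ∘ Fin.castSucc) (hb.comp Fin.strictMono_castSucc.monotone)
    simp only [Function.comp_apply, Fin.castSucc_zero] at this
    rw [Fin.sum_univ_castSucc]
    simp only [Fin.succ_castSucc, this, Fin.succ_last]
    exact intervalMass_add f (hb (Fin.zero_le _)) (hb (Fin.castSucc_le_succ _))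

lemma intervalMass_zero_eq_sum (f : Fin n → ℝ) : intervalMass f 0 n = ∑ j, f j := by
  simp [intervalMass]

lemma sum_intervalMass_of_partition (f : Fin n → ℝ) {k : ℕ} {b : Fin (k + 1) → ℕ}
    (hb : Monotone b) (h0 : b 0 = 0) (hn : b (Fin.last k) = n) :
    ∑ i : Fin k, intervalMass f (b i.castSucc) (b i.succ) = ∑ j, f j := by
  rw [sum_intervalMass_of_monotone f hb, h0, hn, intervalMass_zero_eq_sum]

lemma intervalMass_sub (p q : Fin n → ℝ) (a c : ℕ) :
    intervalMass p a c - intervalMass q a c = intervalMass (p - q) a c := by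
  simp [intervalMass, sum_sub_distrib]

lemma abs_intervalMass_le (f : Fin n → ℝ) (a c : ℕ) :
    |intervalMass f a c| ≤ intervalMass (fun j => |f j|) a c :=
  abs_sum_le_sum_abs _ _

lemma abs_intervalMass_of_mul_nonneg {f : Fin n → ℝ} {a c : ℕ}
    (h : ∀ u v : Fin n, a ≤ u → u ≤ v → v < c → 0 ≤ f u * f v) :
    |intervalMass f a c| = intervalMass (fun j => |f j|) a c := by
  set s := univ.filter (fun j : Fin n => a ≤ (j : ℕ) ∧ (j : ℕ) < c)
  have hs : ∀ u ∈ s, ∀ v ∈ s, 0 ≤ f u * f v := by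
    simp only [s, mem_filter, mem_univ, true_and]
    intro u hu v hv
    rcases le_total u v with huv | hvu
    · exact h u v hu.1 huv hv.2
    · exact mul_comm (f v) (f u) ▸ h v u hv.1 hvu hu.2
  by_cases hneg : ∃ v ∈ s, f v < 0
  · obtain ⟨v, hv, hfv⟩ := hneg
    have hnonpos : ∀ u ∈ s, f u ≤ 0 := fun u hu => nonpos_of_mul_nonneg_left (hs u hu v hv) hfv
    rw [intervalMass, abs_of_nonpos (sum_nonpos hnonpos), ← sum_neg_distrib]
    exact sum_congr rfl fun u hu => (abs_of_nonpos (hnonpos u hu)).symm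
  · push Not at hneg
    rw [intervalMass, abs_sum_of_nonneg hneg]
    exact sum_congr rfl fun u hu => (abs_of_nonneg (hneg u hu)).symm

end IntervalMass

lemma AkDist_eq_L1Dist_of_mul_nonneg {n k : ℕ} {p q : Fin n → ℝ} {b : Fin (k + 1) → ℕ}
    (hb : Monotone b) (h0 : b 0 = 0) (hn : b (Fin.last k) = n)
    (hsign : ∀ i : Fin k, ∀ u v : Fin n, b i.castSucc ≤ u → u ≤ v → v < b i.succ →
      0 ≤ (p - q) u * (p - q) v) :
    AkDist n k p q = L1Dist p q := by
  have hL1 : L1Dist p q = ∑ j, |(p - q) j| := rfl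
  refine IsGreatest.csSup_eq ⟨⟨b, hb, h0, hn, ?_⟩, ?_⟩
  · simp only [intervalMass_sub, abs_intervalMass_of_mul_nonneg (hsign _),
      sum_intervalMass_of_partition _ hb h0 hn, hL1]
  · rintro _ ⟨b', hb', h0', hn', rfl⟩
    simp only [intervalMass_sub, hL1, ← sum_intervalMass_of_partition _ hb' h0' hn']
    exact sum_le_sum fun i _ => abs_intervalMass_le _ _ _

def CutFree (S : Finset ℕ) (u v : ℕ) : Prop := ∀ c ∈ S, u < c → v < c

lemma CutFree.mono {S T : Finset ℕ} {u v : ℕ} (h : CutFree T u v) (hST : S ⊆ T) :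
    CutFree S u v :=
  fun c hc => h c (hST hc)

lemma CutFree.of_le_right {S : Finset ℕ} {a u v : ℕ} (h : CutFree S a v) (huv : u ≤ v) :
    CutFree S a u :=
  fun c hc hac => huv.trans_lt (h c hc hac)

lemma CutFree.exists_mem_le {S : Finset ℕ} {u v : ℕ} (h : CutFree S u v) (h0 : 0 ∈ S) :
    ∃ a ∈ S, a ≤ u ∧ CutFree S a v := by
  have hne : (S.filter (· ≤ u)).Nonempty := ⟨0, mem_filter.2 ⟨h0, Nat.zero_le u⟩⟩
  obtain ⟨haS, hau⟩ := mem_filter.1 (max'_mem _ hne)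
  refine ⟨_, haS, hau, fun c hc hac => h c hc (not_le.1 fun hcu => ?_)⟩
  exact hac.not_ge (le_max' _ _ (mem_filter.2 ⟨hc, hcu⟩))

lemma exists_partition_of_cuts {n k : ℕ} (F : Finset ℕ) (h0 : 0 ∈ F) (hn : n ∈ F)
    (hle : ∀ c ∈ F, c ≤ n) (hcard : F.card ≤ k + 1) :
    ∃ b : Fin (k + 1) → ℕ, Monotone b ∧ b 0 = 0 ∧ b (Fin.last k) = n ∧
      ∀ i : Fin k, ∀ u v : ℕ, b i.castSucc ≤ u → v < b i.succ → CutFree F u v := by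
  have hpos : 0 < F.card := card_pos.2 ⟨0, h0⟩
  set e := F.orderEmbOfFin rfl
  -- pad the increasing enumeration of `F` with its last value `n`
  let clamp (i : ℕ) : Fin F.card := ⟨min i (F.card - 1), by omega⟩
  have hclamp : Monotone clamp := fun i j hij => Fin.mk_le_mk.2 (min_le_min_right _ hij)
  refine ⟨fun i => e (clamp i), e.monotone.comp (hclamp.comp Fin.val_strictMono.monotone),
    ?_, ?_, ?_⟩
  · change e (clamp 0) = 0
    rw [show clamp 0 = ⟨0, hpos⟩ by simp [clamp], orderEmbOfFin_zero rfl hpos]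
    exact le_antisymm (min'_le _ _ h0) (Nat.zero_le _)
  · change e (clamp k) = n
    rw [show clamp k = ⟨F.card - 1, by omega⟩ by simp [clamp]; omega,
      orderEmbOfFin_last rfl hpos]
    exact le_antisymm (max'_le _ _ _ hle) (le_max' _ _ hn)
  · intro i u v hu hv c hc huc
    obtain ⟨j, rfl⟩ : c ∈ Set.range e := by rwa [range_orderEmbOfFin]
    have hij : clamp i.castSucc < j := e.lt_iff_lt.1 (lt_of_le_of_lt hu huc)
    have : clamp i.succ ≤ j := by
      simp only [clamp, Fin.lt_def, Fin.le_def, Fin.val_succ, Fin.val_castSucc] at hij ⊢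
      omega
    exact lt_of_lt_of_le hv (e.monotone this)

noncomputable def rootCuts (R : ℝ[X]) : Finset ℕ := R.roots.toFinset.image fun r => ⌊r⌋₊ + 1

lemma card_rootCuts_le (R : ℝ[X]) : (rootCuts R).card ≤ R.natDegree :=
  card_image_le.trans ((Multiset.toFinset_card_le _).trans (card_roots' R))

lemma eval_mul_eval_nonneg_of_cutFree {R : ℝ[X]} {u v : ℕ} (huv : u ≤ v)
    (h : CutFree (rootCuts R) u v) : 0 ≤ R.eval (u : ℝ) * R.eval (v : ℝ) := by
  by_contra! hneg
  have hR : R ≠ 0 := by rintro rfl; simp at hneg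
  obtain ⟨r, ⟨hur, hrv⟩, hr⟩ : ∃ r ∈ Set.Ioo (u : ℝ) v, R.eval r = 0 := by
    have hcont := R.continuous.continuousOn (s := Set.Icc (u : ℝ) v)
    rcases mul_neg_iff.1 hneg with ⟨hu, hv⟩ | ⟨hu, hv⟩
    · exact intermediate_value_Ioo' (by exact_mod_cast huv) hcont ⟨hv, hu⟩
    · exact intermediate_value_Ioo (by exact_mod_cast huv) hcont ⟨hu, hv⟩
  have hcut : ⌊r⌋₊ + 1 ∈ rootCuts R :=
    mem_image_of_mem _ (Multiset.mem_toFinset.2 ((mem_roots hR).2 hr))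
  have hr0 : 0 ≤ r := (Nat.cast_nonneg u).trans hur.le
  have hvr : v ≤ ⌊r⌋₊ := Nat.lt_succ_iff.1 (h _ hcut (Nat.lt_succ_of_le (Nat.le_floor hur.le)))
  exact hrv.not_ge ((Nat.le_floor_iff hr0).1 hvr)

lemma Fin.exists_castSucc_le_lt_succ {k a : ℕ} (b : Fin (k + 1) → ℕ) (h0 : b 0 ≤ a)
    (hlast : a < b (Fin.last k)) : ∃ i : Fin k, b i.castSucc ≤ a ∧ a < b i.succ := by
  induction k with
  | zero => exact absurd hlast (not_lt.2 h0)
  | succ k ih =>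
    by_cases ha : a < b (Fin.last k).castSucc
    · obtain ⟨i, hi⟩ := ih (b ∘ Fin.castSucc) h0 ha
      exact ⟨i.castSucc, hi⟩
    · exact ⟨Fin.last k, not_lt.1 ha, hlast⟩

def IsPiecewisePolyOn {n : ℕ} (S : Finset ℕ) (d : ℕ) (f : Fin n → ℝ) : Prop :=
  ∀ a : ℕ, ∃ R : ℝ[X], R.natDegree ≤ d ∧
    ∀ x : Fin n, a ≤ x → CutFree S a x → f x = R.eval (x : ℝ)

lemma IsPiecewisePolyOn.sub {n d : ℕ} {S T : Finset ℕ} {f g : Fin n → ℝ}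
    (hf : IsPiecewisePolyOn S d f) (hg : IsPiecewisePolyOn T d g) :
    IsPiecewisePolyOn (S ∪ T) d (f - g) := by
  intro a
  obtain ⟨P, hP, hfP⟩ := hf a
  obtain ⟨Q, hQ, hgQ⟩ := hg a
  refine ⟨P - Q, (natDegree_sub_le P Q).trans (max_le hP hQ), fun x hax hcut => ?_⟩
  rw [Pi.sub_apply, eval_sub, hfP x hax (hcut.mono subset_union_left),
    hgQ x hax (hcut.mono subset_union_right)]

lemma isPiecewisePolyOn_image {n t d : ℕ} {p : Fin n → ℝ} {b : Fin (t + 1) → ℕ}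
    (h0 : b 0 = 0) (hn : b (Fin.last t) = n)
    (hP : ∀ i : Fin t, ∃ P : ℝ[X], P.degree ≤ d ∧
      ∀ x : Fin n, b i.castSucc ≤ x → x < b i.succ → p x = P.eval (x : ℝ)) :
    IsPiecewisePolyOn (univ.image b) d p := by
  intro a
  by_cases ha : a < n
  · obtain ⟨i, hia, hai⟩ := Fin.exists_castSucc_le_lt_succ b (h0 ▸ Nat.zero_le a) (hn ▸ ha)
    obtain ⟨P, hPd, hpP⟩ := hP i
    exact ⟨P, natDegree_le_iff_degree_le.2 hPd, fun x hax hcut =>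
      hpP x (hia.trans hax) (hcut _ (mem_image_of_mem _ (mem_univ _)) hai)⟩
  · exact ⟨0, by simp, fun x hax => absurd (hax.trans_lt x.isLt) ha⟩

lemma IsPiecewisePolyOn.exists_signCuts {n d : ℕ} {S : Finset ℕ} {f : Fin n → ℝ}
    (hf : IsPiecewisePolyOn S d f) (h0 : 0 ∈ S) (hn : n ∈ S) :
    ∃ F : Finset ℕ, 0 ∈ F ∧ n ∈ F ∧ (∀ c ∈ F, c ≤ n) ∧ F.card ≤ S.card + (S.card - 1) * d ∧
      ∀ u v : Fin n, u ≤ v → CutFree F u v → 0 ≤ f u * f v := by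
  choose R hRd hfR using hf
  set T := S ∪ (S.erase n).biUnion fun a => rootCuts (R a)
  refine ⟨T.filter (· ≤ n), by simp [T, h0], by simp [T, hn], fun c hc => (mem_filter.1 hc).2,
    ?_, fun u v huv hcut => ?_⟩
  · calc (T.filter (· ≤ n)).card ≤ T.card := card_filter_le _ _
      _ ≤ S.card + ((S.erase n).biUnion fun a => rootCuts (R a)).card := card_union_le _ _
      _ ≤ S.card + (S.card - 1) * d := by
        rw [← card_erase_of_mem hn]
        gcongr
        exact card_biUnion_le_card_mul _ _ _ fun a _ => (card_rootCuts_le _).trans (hRd a)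
  · have hcutT : CutFree T u v := fun c hc huc =>
      not_le.1 fun hcv => (hcut c (mem_filter.2 ⟨hc, hcv.trans v.isLt.le⟩) huc).not_ge hcv
    obtain ⟨a, haS, hau, ha⟩ := (hcutT.mono subset_union_left).exists_mem_le h0
    have haR : rootCuts (R a) ⊆ T :=
      subset_union_right.trans' <| subset_biUnion_of_mem (fun a => rootCuts (R a)) <|
        mem_erase.2 ⟨(hau.trans_lt u.isLt).ne, haS⟩
    rw [hfR a u hau (ha.of_le_right huv), hfR a v (hau.trans huv) ha]
    exact eval_mul_eval_nonneg_of_cutFree huv (hcutT.mono haR)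

lemma card_image_union_image_le {t : ℕ} (b b' : Fin (t + 1) → ℕ) (h : b 0 = b' 0) :
    (univ.image b ∪ univ.image b').card ≤ 2 * t + 1 := by
  have hinter : 1 ≤ (univ.image b ∩ univ.image b').card :=
    card_pos.2 ⟨b 0, mem_inter.2
      ⟨mem_image_of_mem _ (mem_univ _), h ▸ mem_image_of_mem _ (mem_univ _)⟩⟩
  have hb : (univ.image b).card ≤ t + 1 := card_image_le.trans (by simp)
  have hb' : (univ.image b').card ≤ t + 1 := card_image_le.trans (by simp)
  have := card_union_add_card_inter (univ.image b) (univ.image b')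
  omega

theorem Ak_eq_L1_piecewise_poly_general (n t d : ℕ) (p q : Fin n → ℝ)
    (hpp : IsPiecewisePoly t d p) (hqq : IsPiecewisePoly t d q) :
    AkDist n (2 * t * (d + 1)) p q = L1Dist p q := by
  obtain ⟨bp, -, hbp0, hbpn, hP⟩ := hpp
  obtain ⟨bq, -, hbq0, hbqn, hQ⟩ := hqq
  set S := univ.image bp ∪ univ.image bq
  have hS : S.card ≤ 2 * t + 1 := card_image_union_image_le bp bq (hbp0.trans hbq0.symm)
  have hD : IsPiecewisePolyOn S d (p - q) :=
    (isPiecewisePolyOn_image hbp0 hbpn hP).sub (isPiecewisePolyOn_image hbq0 hbqn hQ)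
  obtain ⟨F, hF0, hFn, hFle, hFcard, hFsign⟩ :=
    hD.exists_signCuts (mem_union_left _ (hbp0 ▸ mem_image_of_mem _ (mem_univ 0)))
      (mem_union_left _ (hbpn ▸ mem_image_of_mem _ (mem_univ _)))
  obtain ⟨b, hb, hb0, hbn, hbF⟩ := exists_partition_of_cuts F hF0 hFn hFle <| by
    calc F.card ≤ S.card + (S.card - 1) * d := hFcard
      _ ≤ 2 * t + 1 + 2 * t * d := by gcongr; omega
      _ = 2 * t * (d + 1) + 1 := by ring
  exact AkDist_eq_L1Dist_of_mul_nonneg hb hb0 hbn fun i u v hu huv hv =>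
    hFsign u v huv (hbF i u v hu hv)

/-- For `t`-piecewise degree-`d` distributions `p, q` on `[n]`, the `A_k` distance with
`k = 2t(d+1)` equals the `L1` distance. -/
theorem Ak_eq_L1_piecewise_poly (n t d : ℕ) (p q : Fin n → ℝ)
    (hp : IsDist p) (hq : IsDist q)
    (hpp : IsPiecewisePoly t d p) (hqq : IsPiecewisePoly t d q)
    (hk2 : 2 ≤ 2 * t * (d + 1)) (hkn : 2 * t * (d + 1) ≤ n) :
    AkDist n (2 * t * (d + 1)) p q = L1Dist p q :=
  Ak_eq_L1_piecewise_poly_general n t d p q hpp hqq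
end

section
/- There exists an absolute constant C > 0 with the following property. Let q be a probability distribution on [n], let ε ∈ (0,1), let m > 0 be a real number, and let X_1,…,X_n be independent random variables with X_i distributed as Poi(m·q_i). Define Z = Σ_{i=1}^n ((X_i − m/n)² − X_i). Then: (i) if q = U_n, then Pr[Z ≥ 4m/√n] ≤ 1/3; and (ii) if ‖q − U_n‖_2 ≥ ε/√n and m ≥ C·√n/ε², then Pr[Z ≤ 4m/√n] ≤ 1/3. -/
open Finset ProbabilityTheory MeasureTheory

/-!
Under `Xᵢ ~ Poi(m qᵢ)` the summand `(Xᵢ - m/n)² - Xᵢ` of `Z` is a polynomial in `Xᵢ`,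
so its mean `m²(qᵢ - 1/n)²` and variance `2m²qᵢ² + 4m³qᵢ(qᵢ - 1/n)²` follow from the
Poisson factorial moments `E[Xᵢ(Xᵢ - 1)⋯(Xᵢ - k + 1)] = (m qᵢ)^k`. Hence
`E Z = m²‖q - U_n‖₂²` and, by independence, `Var Z` is the sum of the variances; both parts
are then Chebyshev's inequality. For `q = U_n` we get `E Z = 0` and `Var Z = 2m²/n`, so the
tail is at most `1/8`. In the far case, with `v = ‖q - U_n‖₂`, the bound `m ≥ 100 √n/ε²`
gives `m v ≥ 100` and `m v² √n ≥ 100`, which make the threshold `4m/√n` at most `E Z/25`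
and `Var Z` at most `(E Z)²/12`.
-/

open Real
open scoped NNReal Nat

theorem Nat.cast_descFactorial_succ {S : Type*} [Ring S] (n k : ℕ) :
    ((n.descFactorial (k + 1) : ℕ) : S) = ((n : S) - k) * n.descFactorial k := by
  rw [Nat.descFactorial_succ]
  rcases le_or_gt k n with h | h
  · rw [Nat.cast_mul, Nat.cast_sub h]
  · simp [Nat.descFactorial_eq_zero_iff_lt.mpr h]

namespace ProbabilityTheory

section PoissonFactorialMoments

theorem hasSum_descFactorial_poissonMeasure (r : ℝ≥0) (k : ℕ) :
    HasSum (fun n ↦ exp (-r) * r ^ n / n ! * (n.descFactorial k : ℝ)) ((r : ℝ) ^ k) := by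
  rw [← hasSum_nat_add_iff' k]
  have hvanish : ∑ n ∈ range k, exp (-r) * r ^ n / n ! * (n.descFactorial k : ℝ) = 0 :=
    sum_eq_zero fun n hn ↦ by simp [Nat.descFactorial_eq_zero_iff_lt.mpr (mem_range.mp hn)]
  rw [hvanish, sub_zero]
  refine (mul_one ((r : ℝ) ^ k) ▸ (hasSum_one_poissonMeasure r).mul_left _).congr_fun
    fun j ↦ ?_
  have hfact : ((j ! : ℕ) : ℝ) * (j + k).descFactorial k = (j + k)! := by
    exact_mod_cast by simpa using Nat.factorial_mul_descFactorial (Nat.le_add_left k j)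
  rw [← hfact, pow_add]
  field_simp

theorem integrable_descFactorial_poissonMeasure (r : ℝ≥0) (k : ℕ) :
    Integrable (fun n : ℕ ↦ (n.descFactorial k : ℝ)) (poissonMeasure r) := by
  rw [integrable_poissonMeasure_iff]
  simpa using (hasSum_descFactorial_poissonMeasure r k).summable

theorem integral_descFactorial_poissonMeasure (r : ℝ≥0) (k : ℕ) :
    ∫ n, (n.descFactorial k : ℝ) ∂poissonMeasure r = (r : ℝ) ^ k :=
  (hasSum_integral_poissonMeasure (integrable_descFactorial_poissonMeasure r k)).unique
    (hasSum_descFactorial_poissonMeasure r k)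

variable {d : ℕ} (r : ℝ≥0) (c : Fin d → ℝ)

theorem integrable_sum_descFactorial_poissonMeasure :
    Integrable (fun n : ℕ ↦ ∑ k, c k * (n.descFactorial k : ℝ)) (poissonMeasure r) :=
  integrable_finsetSum _ fun k _ ↦ (integrable_descFactorial_poissonMeasure r k).const_mul _

theorem integral_sum_descFactorial_poissonMeasure :
    ∫ n, ∑ k, c k * (n.descFactorial k : ℝ) ∂poissonMeasure r =
      ∑ k, c k * (r : ℝ) ^ (k : ℕ) := by
  rw [integral_finsetSum univ fun (k : Fin d) _ ↦
    (integrable_descFactorial_poissonMeasure r k).const_mul (c k)]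
  simp_rw [integral_const_mul, integral_descFactorial_poissonMeasure]

end PoissonFactorialMoments

def chiSqSummand (a : ℝ) (x : ℕ) : ℝ := ((x : ℝ) - a) ^ 2 - x

section ChiSqSummand

variable (a : ℝ) (r : ℝ≥0)

theorem chiSqSummand_eq_sum_descFactorial (x : ℕ) :
    chiSqSummand a x = ∑ k : Fin 3, ![a ^ 2, -2 * a, 1] k * (x.descFactorial k : ℝ) := by
  simp only [chiSqSummand, Fin.sum_univ_succ, Fin.sum_univ_zero, Matrix.cons_val_zero,
    Matrix.cons_val_succ, Fin.val_zero, Fin.val_succ, Nat.cast_descFactorial_succ,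
    Nat.descFactorial_zero, Nat.cast_add, Nat.cast_zero, Nat.cast_one]
  ring

theorem chiSqSummand_sq_eq_sum_descFactorial (x : ℕ) :
    chiSqSummand a x ^ 2 = ∑ k : Fin 5,
      ![a ^ 4, 4 * a ^ 2 - 4 * a ^ 3, 6 * a ^ 2 - 8 * a + 2, 4 - 4 * a, 1] k *
        (x.descFactorial k : ℝ) := by
  simp only [chiSqSummand, Fin.sum_univ_succ, Fin.sum_univ_zero, Matrix.cons_val_zero,
    Matrix.cons_val_succ, Fin.val_zero, Fin.val_succ, Nat.cast_descFactorial_succ,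
    Nat.descFactorial_zero, Nat.cast_add, Nat.cast_zero, Nat.cast_one]
  ring

theorem memLp_chiSqSummand_poissonMeasure : MemLp (chiSqSummand a) 2 (poissonMeasure r) := by
  rw [memLp_two_iff_integrable_sq .of_discrete, funext (chiSqSummand_sq_eq_sum_descFactorial a)]
  exact integrable_sum_descFactorial_poissonMeasure r _

theorem integral_chiSqSummand_poissonMeasure :
    ∫ x, chiSqSummand a x ∂poissonMeasure r = ((r : ℝ) - a) ^ 2 := by
  simp_rw [chiSqSummand_eq_sum_descFactorial, integral_sum_descFactorial_poissonMeasure]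
  simp only [Fin.sum_univ_succ, Fin.sum_univ_zero, Matrix.cons_val_zero, Matrix.cons_val_succ,
    Fin.val_zero, Fin.val_succ]
  ring

theorem variance_chiSqSummand_poissonMeasure :
    variance (chiSqSummand a) (poissonMeasure r) = 2 * r ^ 2 + 4 * r * ((r : ℝ) - a) ^ 2 := by
  rw [variance_eq_sub (memLp_chiSqSummand_poissonMeasure a r),
    integral_chiSqSummand_poissonMeasure]
  simp_rw [Pi.pow_apply, chiSqSummand_sq_eq_sum_descFactorial,
    integral_sum_descFactorial_poissonMeasure]
  simp only [Fin.sum_univ_succ, Fin.sum_univ_zero, Matrix.cons_val_zero, Matrix.cons_val_succ,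
    Fin.val_zero, Fin.val_succ]
  ring

end ChiSqSummand

section ChiSqStat

variable {Ω ι : Type*} [MeasurableSpace Ω] {μ : Measure Ω}

theorem HasLaw.memLp_chiSqSummand {X : Ω → ℕ} {r : ℝ≥0}
    (hX : HasLaw X (poissonMeasure r) μ) (a : ℝ) :
    MemLp (fun ω ↦ chiSqSummand a (X ω)) 2 μ := by
  have h := memLp_chiSqSummand_poissonMeasure a r
  rwa [← hX.map_eq, memLp_map_measure_iff .of_discrete hX.aemeasurable] at h

theorem HasLaw.integral_chiSqSummand {X : Ω → ℕ} {r : ℝ≥0}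
    (hX : HasLaw X (poissonMeasure r) μ) (a : ℝ) :
    ∫ ω, chiSqSummand a (X ω) ∂μ = ((r : ℝ) - a) ^ 2 := by
  rw [← integral_chiSqSummand_poissonMeasure a r, ← hX.integral_comp .of_discrete]
  rfl

theorem HasLaw.variance_chiSqSummand {X : Ω → ℕ} {r : ℝ≥0}
    (hX : HasLaw X (poissonMeasure r) μ) (a : ℝ) :
    variance (fun ω ↦ chiSqSummand a (X ω)) μ = 2 * r ^ 2 + 4 * r * ((r : ℝ) - a) ^ 2 := by
  rw [← variance_chiSqSummand_poissonMeasure a r, ← hX.map_eq,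
    variance_map .of_discrete hX.aemeasurable]
  rfl

def chiSqStat [Fintype ι] (a : ℝ) (X : ι → Ω → ℕ) (ω : Ω) : ℝ :=
  ∑ i, chiSqSummand a (X i ω)

variable [Fintype ι] {X : ι → Ω → ℕ} {r : ι → ℝ≥0}

theorem memLp_chiSqStat (hX : ∀ i, HasLaw (X i) (poissonMeasure (r i)) μ) (a : ℝ) :
    MemLp (chiSqStat a X) 2 μ :=
  memLp_finsetSum univ fun i _ ↦ (hX i).memLp_chiSqSummand a

theorem integral_chiSqStat [IsFiniteMeasure μ] (hX : ∀ i, HasLaw (X i) (poissonMeasure (r i)) μ)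
    (a : ℝ) : μ[chiSqStat a X] = ∑ i, ((r i : ℝ) - a) ^ 2 := by
  unfold chiSqStat
  rw [integral_finsetSum univ fun i _ ↦ ((hX i).memLp_chiSqSummand a).integrable one_le_two]
  exact sum_congr rfl fun i _ ↦ (hX i).integral_chiSqSummand a

theorem variance_chiSqStat (hX : ∀ i, HasLaw (X i) (poissonMeasure (r i)) μ)
    (hind : iIndepFun X μ) (a : ℝ) :
    variance (chiSqStat a X) μ = ∑ i, (2 * r i ^ 2 + 4 * r i * ((r i : ℝ) - a) ^ 2) := by
  have hsum : chiSqStat a X = ∑ i, fun ω ↦ chiSqSummand a (X i ω) := by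
    ext ω
    simp [chiSqStat]
  rw [hsum, IndepFun.variance_sum (fun i _ ↦ (hX i).memLp_chiSqSummand a)
    fun i _ j _ hij ↦ (hind.indepFun hij).comp (measurable_of_countable (chiSqSummand a))
      (measurable_of_countable (chiSqSummand a))]
  exact sum_congr rfl fun i _ ↦ (hX i).variance_chiSqSummand a

end ChiSqStat

end ProbabilityTheory

section Chebyshev

variable {Ω : Type*} [MeasurableSpace Ω] {μ : Measure Ω} [IsFiniteMeasure μ] {X : Ω → ℝ}
  {t : ℝ}

theorem meas_ge_le_variance_div_sq_of_integral_lt (hX : MemLp X 2 μ) (ht : μ[X] < t) :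
    μ {ω | t ≤ X ω} ≤ ENNReal.ofReal (variance X μ / (t - μ[X]) ^ 2) := by
  refine (measure_mono fun ω (hω : t ≤ X ω) ↦ ?_).trans
    (meas_ge_le_variance_div_sq hX (sub_pos.mpr ht))
  exact (sub_le_sub_right hω _).trans (le_abs_self _)

theorem meas_le_le_variance_div_sq_of_lt_integral (hX : MemLp X 2 μ) (ht : t < μ[X]) :
    μ {ω | X ω ≤ t} ≤ ENNReal.ofReal (variance X μ / (μ[X] - t) ^ 2) := by
  refine (measure_mono fun ω (hω : X ω ≤ t) ↦ ?_).trans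
    (meas_ge_le_variance_div_sq hX (sub_pos.mpr ht))
  exact (sub_le_sub_left hω _).trans (abs_sub_comm (X ω) _ ▸ le_abs_self _)

end Chebyshev

theorem sum_sq_eq_sum_sq_sub_add {n : ℕ} {q : Fin n → ℝ} (hq : ∑ i, q i = 1) :
    ∑ i, q i ^ 2 = ∑ i, (q i - 1 / n) ^ 2 + 1 / n := by
  have hn : (n : ℝ) ≠ 0 := by
    rintro h
    obtain rfl : n = 0 := by exact_mod_cast h
    simp at hq
  have hexpand : ∀ i, (q i - 1 / n) ^ 2 = q i ^ 2 - 2 / n * q i + 1 / n ^ 2 := fun i ↦ by ring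
  simp_rw [hexpand, sum_add_distrib, sum_sub_distrib, ← mul_sum, hq, sum_const, card_univ,
    Fintype.card_fin, nsmul_eq_mul]
  field_simp
  ring

theorem sum_mul_sq_sub_le {ι : Type*} [Fintype ι] (q : ι → ℝ) (c : ℝ) :
    ∑ i, q i * (q i - c) ^ 2 ≤ (√(∑ i, (q i - c) ^ 2) + c) * ∑ i, (q i - c) ^ 2 := by
  rw [mul_sum]
  refine sum_le_sum fun i _ ↦ mul_le_mul_of_nonneg_right ?_ (sq_nonneg _)
  have hdev : |q i - c| ≤ √(∑ j, (q j - c) ^ 2) := by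
    rw [← sqrt_sq_eq_abs]
    exact sqrt_le_sqrt (single_le_sum (fun j _ ↦ sq_nonneg (q j - c)) (mem_univ i))
  linarith [le_abs_self (q i - c)]

theorem sample_size_bounds {ε t v m : ℝ} (hε : 0 < ε) (hε1 : ε ≤ 1) (ht : 0 < t)
    (hv : ε / t ≤ v) (hm : 100 * t / ε ^ 2 ≤ m) :
    0 < m ∧ 100 ≤ m * v ∧ 100 ≤ m * v ^ 2 * t := by
  have hεt : 0 < ε / t := div_pos hε ht
  have hm0 : 0 < 100 * t / ε ^ 2 := by positivity
  have hmv : 100 / ε ≤ m * v := calc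
    100 / ε = 100 * t / ε ^ 2 * (ε / t) := by field_simp
    _ ≤ m * v := mul_le_mul hm hv hεt.le (hm0.le.trans hm)
  refine ⟨hm0.trans_le hm, (le_div_self (by norm_num) hε hε1).trans hmv, ?_⟩
  calc 100 = 100 / ε * (ε / t) * t := by field_simp
    _ ≤ m * v * v * t :=
      mul_le_mul_of_nonneg_right
        (mul_le_mul hmv hv hεt.le ((div_pos (by norm_num) hε).le.trans hmv)) ht.le
    _ = m * v ^ 2 * t := by ring

theorem far_threshold_le {m v t : ℝ} (hm : 0 < m) (ht : 0 < t) (hmvt : 100 ≤ m * v ^ 2 * t) :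
    4 * m / t ≤ m ^ 2 * v ^ 2 / 25 := by
  rw [div_le_div_iff₀ ht (by norm_num)]
  nlinarith

theorem far_variance_le {m v t : ℝ} (hm : 0 < m) (ht : 1 ≤ t) (hmv : 100 ≤ m * v)
    (hmvt : 100 ≤ m * v ^ 2 * t) :
    2 * m ^ 2 * (v ^ 2 + 1 / t ^ 2) + 4 * m ^ 3 * ((v + 1 / t ^ 2) * v ^ 2) ≤
      (m ^ 2 * v ^ 2) ^ 2 / 12 := by
  set u := m * v
  set w := m * v ^ 2 * t
  have hu2 : 10000 ≤ u ^ 2 := by nlinarith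
  have hA : 2 * m ^ 2 * v ^ 2 ≤ u ^ 4 / 5000 := by
    have : m ^ 2 * v ^ 2 = u ^ 2 := by ring
    nlinarith
  have hB : 2 * m ^ 2 / t ^ 2 ≤ u ^ 4 / 5000 := by
    rw [div_le_div_iff₀ (by positivity) (by norm_num)]
    have : u ^ 4 * t ^ 2 = m ^ 2 * w ^ 2 := by ring
    nlinarith [mul_le_mul_of_nonneg_left hmvt (by positivity : (0 : ℝ) ≤ w)]
  have hC : 4 * m ^ 3 * v ^ 3 ≤ u ^ 4 / 25 := by
    have : m ^ 3 * v ^ 3 = u ^ 3 := by ring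
    nlinarith [pow_pos (by linarith : (0 : ℝ) < u) 3]
  have hD : 4 * m ^ 3 * v ^ 2 / t ^ 2 ≤ u ^ 4 / 25 := by
    rw [div_le_div_iff₀ (by positivity) (by norm_num)]
    have : u ^ 4 * t ^ 2 = m ^ 3 * v ^ 2 * w * t := by ring
    have hmv2 : 0 ≤ m ^ 3 * v ^ 2 := by positivity
    nlinarith [mul_le_mul_of_nonneg_left hmvt hmv2,
      mul_le_mul_of_nonneg_left ht (mul_nonneg hmv2 (by linarith : (0 : ℝ) ≤ w))]
  calc 2 * m ^ 2 * (v ^ 2 + 1 / t ^ 2) + 4 * m ^ 3 * ((v + 1 / t ^ 2) * v ^ 2)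
      = 2 * m ^ 2 * v ^ 2 + 2 * m ^ 2 / t ^ 2 + 4 * m ^ 3 * v ^ 3 + 4 * m ^ 3 * v ^ 2 / t ^ 2 := by
        ring
    _ ≤ u ^ 4 / 12 := by linarith
    _ = (m ^ 2 * v ^ 2) ^ 2 / 12 := by ring

theorem chebyshev_ratio_le {E θ V : ℝ} (hE : 0 < E) (hθ : θ ≤ E / 25)
    (hV : V ≤ E ^ 2 / 12) : V / (E - θ) ^ 2 ≤ 1 / 3 := by
  have hgap : E / 2 ≤ E - θ := by linarith
  rw [div_le_iff₀ (by nlinarith)]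
  nlinarith [mul_self_le_mul_self (by positivity) hgap]

section Tester

variable {Ω : Type*} [MeasurableSpace Ω] {μ : Measure Ω} [IsProbabilityMeasure μ] {n : ℕ}
  {X : Fin n → Ω → ℕ} {m : ℝ}

theorem chiSqStat_uniform_tail (hn : 1 ≤ n) (hm : 0 < m)
    (hX : ∀ i, HasLaw (X i) (poissonMeasure (m * unif n i).toNNReal) μ) (hind : iIndepFun X μ) :
    μ {ω | 4 * m / √n ≤ chiSqStat (m / n) X ω} ≤ 1 / 3 := by
  have hn0 : (0 : ℝ) < n := by exact_mod_cast hn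
  have hr : ∀ i, ((m * unif n i).toNNReal : ℝ) = m / n := fun i ↦ by
    rw [coe_toNNReal _ (by unfold unif; positivity), unif, mul_one_div]
  have hmean : μ[chiSqStat (m / n) X] = 0 := by simp [integral_chiSqStat hX, hr]
  have hvar : variance (chiSqStat (m / n) X) μ = 2 * m ^ 2 / n := by
    simp_rw [variance_chiSqStat hX hind, hr, sub_self, sum_const, card_univ, Fintype.card_fin,
      nsmul_eq_mul]
    field_simp
    ring
  refine (meas_ge_le_variance_div_sq_of_integral_lt (memLp_chiSqStat hX _)
    (by rw [hmean]; positivity)).trans (ENNReal.ofReal_le_of_le_toReal ?_)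
  rw [hmean, hvar, sub_zero, div_pow, sq_sqrt hn0.le]
  field_simp
  norm_num

theorem chiSqStat_far_tail {q : Fin n → ℝ} {ε : ℝ} (hn : 1 ≤ n) (hq : IsDist q)
    (hε : 0 < ε) (hε1 : ε ≤ 1) (hL2 : ε / √n ≤ L2Dist q (unif n))
    (hm : 100 * √n / ε ^ 2 ≤ m)
    (hX : ∀ i, HasLaw (X i) (poissonMeasure (m * q i).toNNReal) μ) (hind : iIndepFun X μ) :
    μ {ω | chiSqStat (m / n) X ω ≤ 4 * m / √n} ≤ 1 / 3 := by
  set v := L2Dist q (unif n)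
  have ht : 1 ≤ √n := one_le_sqrt.mpr (by exact_mod_cast hn)
  obtain ⟨hm0, hmv, hmvt⟩ := sample_size_bounds hε hε1 (by positivity) hL2 hm
  have hr : ∀ i, ((m * q i).toNNReal : ℝ) = m * q i := fun i ↦
    coe_toNNReal _ (mul_nonneg hm0.le (hq.1 i))
  have hs : ∑ i, (q i - 1 / n) ^ 2 = v ^ 2 := (sq_sqrt (sum_nonneg fun i _ ↦ sq_nonneg _)).symm
  have hmean : μ[chiSqStat (m / n) X] = m ^ 2 * v ^ 2 := by
    rw [integral_chiSqStat hX, ← hs, mul_sum]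
    exact sum_congr rfl fun i _ ↦ by rw [hr]; ring
  have hvar : variance (chiSqStat (m / n) X) μ ≤ (m ^ 2 * v ^ 2) ^ 2 / 12 := by
    have hterm : ∀ i, 2 * ((m * q i).toNNReal : ℝ) ^ 2 +
        4 * (m * q i).toNNReal * (((m * q i).toNNReal : ℝ) - m / n) ^ 2 =
          2 * m ^ 2 * q i ^ 2 + 4 * m ^ 3 * (q i * (q i - 1 / n) ^ 2) := fun i ↦ by
      rw [hr]; ring
    rw [variance_chiSqStat hX hind]
    simp_rw [hterm, sum_add_distrib, ← mul_sum, sum_sq_eq_sum_sq_sub_add hq.2, hs]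
    calc 2 * m ^ 2 * (v ^ 2 + 1 / n) + 4 * m ^ 3 * ∑ i, q i * (q i - 1 / n) ^ 2
        ≤ 2 * m ^ 2 * (v ^ 2 + 1 / √n ^ 2) + 4 * m ^ 3 * ((v + 1 / √n ^ 2) * v ^ 2) := by
          rw [sq_sqrt (Nat.cast_nonneg n), ← hs]
          gcongr
          exact sum_mul_sq_sub_le q _
      _ ≤ (m ^ 2 * v ^ 2) ^ 2 / 12 := far_variance_le hm0 ht hmv hmvt
  have hθ := far_threshold_le hm0 (by positivity) hmvt
  refine (meas_le_le_variance_div_sq_of_lt_integral (memLp_chiSqStat hX _)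
    (by rw [hmean]; nlinarith)).trans (ENNReal.ofReal_le_of_le_toReal ?_)
  rw [hmean]
  simpa using chebyshev_ratio_le (by nlinarith) hθ hvar

end Tester

/-- **The Poissonized chi-squared uniformity tester.**
With `X i ~ Poi(m qᵢ)` independent and `Z = ∑ i ((Xᵢ - m/n)² - Xᵢ)`:
(i) if `q = U_n` then `Pr[Z ≥ 4m/√n] ≤ 1/3`; (ii) there is a universal constant `C > 0`
such that if `‖q - U_n‖₂ ≥ ε/√n` and `m ≥ C √n/ε²` then `Pr[Z ≤ 4m/√n] ≤ 1/3`. -/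
theorem chi_squared_uniformity_tester :
    ∃ C : ℝ, 0 < C ∧ ∀ (n : ℕ) (q : Fin n → ℝ) (ε m : ℝ)
      (Ω : Type) [MeasurableSpace Ω] (μ : Measure Ω) [IsProbabilityMeasure μ]
      (X : Fin n → Ω → ℕ),
      1 ≤ n → IsDist q → 0 < ε → ε < 1 → 0 < m →
      (∀ i, Measurable (X i)) →
      iIndepFun X μ →
      (∀ i, μ.map (X i) = poissonMeasure (m * q i).toNNReal) →
      (q = unif n →
        μ {ω | 4 * m / Real.sqrt n ≤ ∑ i, (((X i ω : ℝ) - m / n) ^ 2 - (X i ω : ℝ))} ≤ 1 / 3) ∧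
      (ε / Real.sqrt n ≤ L2Dist q (unif n) → C * Real.sqrt n / ε ^ 2 ≤ m →
        μ {ω | ∑ i, (((X i ω : ℝ) - m / n) ^ 2 - (X i ω : ℝ)) ≤ 4 * m / Real.sqrt n} ≤ 1 / 3) := by
  refine ⟨100, by norm_num, fun n q ε m Ω _ μ _ X hn hq hε hε1 hm hXm hind hmap ↦ ?_⟩
  have hX : ∀ i, HasLaw (X i) (poissonMeasure (m * q i).toNNReal) μ :=
    fun i ↦ ⟨(hXm i).aemeasurable, hmap i⟩
  refine ⟨fun hqu ↦ ?_, fun hL2 hmC ↦ chiSqStat_far_tail hn hq hε hε1.le hL2 hmC hX hind⟩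
  subst hqu
  exact chiSqStat_uniform_tail hn hm hX hind
end

section
/- Let q be a probability distribution on [n], let m > 0 be a real number, and let X_i be a random variable distributed as Poi(m·q_i). Set Z_i = (X_i − m/n)² − X_i and Δ_i = 1/n − q_i. Then Var[Z_i] = 2m²·(Δ_i − 1/n)² + 4m³·(1/n − Δ_i)·Δ_i². -/
open Finset ProbabilityTheory MeasureTheory

/-!
The falling factorials `(X)ₖ = X (X - 1) ⋯ (X - k + 1)` of `X ~ Poi(r)` have expectation `r ^ k`.
Since `Z = X (X - 1) - 2 b X + b²` with `b = m / n`, both `Z - b²` and its square are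
combinations of falling factorials, which gives `Var[Z] = 2 r² + 4 r (r - b)²`; substitute
`r = m qᵢ`.
-/

open Real Polynomial
open scoped NNReal Nat

namespace ProbabilityTheory

lemma hasSum_poissonMeasure_mul_descPochhammer (r : ℝ≥0) (k : ℕ) :
    HasSum (fun n : ℕ ↦ exp (-r) * r ^ n / n ! * (descPochhammer ℝ k).eval (n : ℝ)) (r ^ k) := by
  set f : ℕ → ℝ := fun n ↦ exp (-r) * r ^ n / n ! * (n.descFactorial k : ℝ)
  have shift (j : ℕ) : f (j + k) = r ^ k * (exp (-r) * r ^ j / j !) := by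
    have hfac : ((j + k)! : ℝ) = j ! * (j + k).descFactorial k := by
      rw [← Nat.factorial_mul_descFactorial (Nat.le_add_left k j), Nat.add_sub_cancel]
      push_cast; ring
    simp only [f, hfac, pow_add]
    field_simp
  have vanish : ∑ n ∈ range k, f n = 0 :=
    sum_eq_zero fun n hn ↦ by simp [f, Nat.descFactorial_of_lt (mem_range.mp hn)]
  have := (hasSum_nat_add_iff k).mp
    (((hasSum_one_poissonMeasure r).mul_left (r ^ k : ℝ)).congr_fun shift)
  simpa [descPochhammer_eval_eq_descFactorial, vanish] using this

lemma integrable_descPochhammer_poissonMeasure (r : ℝ≥0) (k : ℕ) :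
    Integrable (fun n : ℕ ↦ (descPochhammer ℝ k).eval (n : ℝ)) (poissonMeasure r) := by
  refine integrable_poissonMeasure_iff.mpr
    ((hasSum_poissonMeasure_mul_descPochhammer r k).summable.congr fun n ↦ ?_)
  rw [descPochhammer_eval_eq_descFactorial, Real.norm_natCast]

lemma integral_descPochhammer_poissonMeasure (r : ℝ≥0) (k : ℕ) :
    ∫ n, (descPochhammer ℝ k).eval (n : ℝ) ∂(poissonMeasure r) = r ^ k := by
  simpa using (hasSum_integral_poissonMeasure
    (integrable_descPochhammer_poissonMeasure r k)).unique
    (hasSum_poissonMeasure_mul_descPochhammer r k)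

section FallingFactorialCombination

variable {d : ℕ} (c : Fin d → ℝ) (r : ℝ≥0)

lemma integrable_sum_descPochhammer_poissonMeasure :
    Integrable (fun n : ℕ ↦ ∑ j, c j * (descPochhammer ℝ j).eval (n : ℝ)) (poissonMeasure r) :=
  integrable_finsetSum _ fun (j : Fin d) _ ↦
    (integrable_descPochhammer_poissonMeasure r j).const_mul (c j)

lemma integral_sum_descPochhammer_poissonMeasure :
    ∫ n, ∑ j, c j * (descPochhammer ℝ j).eval (n : ℝ) ∂(poissonMeasure r) =
      ∑ j, c j * r ^ (j : ℕ) := by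
  rw [integral_finsetSum _ fun (j : Fin d) _ ↦
    (integrable_descPochhammer_poissonMeasure r j).const_mul (c j)]
  simp only [integral_const_mul, integral_descPochhammer_poissonMeasure]

end FallingFactorialCombination

lemma variance_poissonMeasure_sub_sq_sub (r : ℝ≥0) (b : ℝ) :
    variance (fun k : ℕ ↦ ((k : ℝ) - b) ^ 2 - k) (poissonMeasure r) =
      2 * r ^ 2 + 4 * r * (r - b) ^ 2 := by
  set Y : ℕ → ℝ := fun n ↦ ∑ j, ![0, -2 * b, 1] j * (descPochhammer ℝ j).eval (n : ℝ)
  have hY : (fun k : ℕ ↦ ((k : ℝ) - b) ^ 2 - k) = fun k ↦ Y k + b ^ 2 := by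
    ext k
    simp only [Y, Fin.sum_univ_three, Fin.isValue, Matrix.cons_val, Fin.coe_ofNat_eq_mod,
      descPochhammer_eval_eq_prod_range, prod_range_succ, prod_range_zero]
    push_cast
    ring
  -- `(X)₂² = (X)₄ + 4 (X)₃ + 2 (X)₂`, `(X)₂ (X)₁ = (X)₃ + 2 (X)₂`, `(X)₁² = (X)₂ + (X)₁`
  have hY_sq : Y ^ 2 = fun n : ℕ ↦
      ∑ j, ![0, 4 * b ^ 2, 2 - 8 * b + 4 * b ^ 2, 4 - 4 * b, 1] j *
        (descPochhammer ℝ j).eval (n : ℝ) := by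
    ext n
    simp only [Y, Pi.pow_apply, Fin.sum_univ_three, Fin.sum_univ_five, Fin.isValue,
      Matrix.cons_val, Fin.coe_ofNat_eq_mod, descPochhammer_eval_eq_prod_range,
      prod_range_succ, prod_range_zero]
    push_cast
    ring
  have hY_memLp : MemLp Y 2 (poissonMeasure r) :=
    (memLp_two_iff_integrable_sq (integrable_sum_descPochhammer_poissonMeasure _ r).1).mpr
      (by rw [← Pi.pow_def, hY_sq]; exact integrable_sum_descPochhammer_poissonMeasure _ r)
  rw [hY, variance_add_const hY_memLp.1, variance_eq_sub hY_memLp, hY_sq,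
    integral_sum_descPochhammer_poissonMeasure, integral_sum_descPochhammer_poissonMeasure]
  simp only [Fin.sum_univ_three, Fin.sum_univ_five, Fin.isValue, Matrix.cons_val,
    Fin.coe_ofNat_eq_mod]
  ring

end ProbabilityTheory

theorem poisson_chi_squared_variance_general (n : ℕ) (q : Fin n → ℝ) (hq : IsDist q)
    (i : Fin n) (m : ℝ) (hm : 0 < m)
    (Ω : Type) [MeasurableSpace Ω] (μ : Measure Ω)
    (X : Ω → ℕ) (hX : Measurable X)
    (hdist : μ.map X = poissonMeasure (m * q i).toNNReal) :
    variance (fun ω => ((X ω : ℝ) - m / n) ^ 2 - (X ω : ℝ)) μ =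
      2 * m ^ 2 * ((1 / n - q i) - 1 / n) ^ 2 +
        4 * m ^ 3 * (1 / n - (1 / n - q i)) * (1 / n - q i) ^ 2 := by
  have hrate : ((m * q i).toNNReal : ℝ) = m * q i :=
    Real.coe_toNNReal _ (mul_nonneg hm.le (hq.1 i))
  have hZ : (fun ω ↦ ((X ω : ℝ) - m / n) ^ 2 - (X ω : ℝ)) =
      (fun k : ℕ ↦ ((k : ℝ) - m / n) ^ 2 - k) ∘ X := rfl
  rw [hZ, ← variance_map measurable_from_nat.aemeasurable hX.aemeasurable, hdist,
    variance_poissonMeasure_sub_sq_sub, hrate]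
  ring

/-- **Variance of one term of the chi-squared statistic.**
If `X ~ Poi(m qᵢ)` and `Zᵢ = (X - m/n)² - X`, then with `Δᵢ = 1/n - qᵢ`,
`Var[Zᵢ] = 2m²(Δᵢ - 1/n)² + 4m³(1/n - Δᵢ)Δᵢ²`. -/
theorem poisson_chi_squared_variance (n : ℕ) (hn : 1 ≤ n) (q : Fin n → ℝ) (hq : IsDist q)
    (i : Fin n) (m : ℝ) (hm : 0 < m)
    (Ω : Type) [MeasurableSpace Ω] (μ : Measure Ω) [IsProbabilityMeasure μ]
    (X : Ω → ℕ) (hX : Measurable X)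
    (hdist : μ.map X = poissonMeasure (m * q i).toNNReal) :
    variance (fun ω => ((X ω : ℝ) - m / n) ^ 2 - (X ω : ℝ)) μ =
      2 * m ^ 2 * ((1 / n - q i) - 1 / n) ^ 2 +
        4 * m ^ 3 * (1 / n - (1 / n - q i)) * (1 / n - q i) ^ 2 :=
  poisson_chi_squared_variance_general n q hq i m hm Ω μ X hX hdist
end

section
/- Let q be a probability distribution on [n], let p = U_n, and let k be an integer with 2 ≤ k ≤ n. Then ‖q − p‖²_{[k]} ≥ ‖q − p‖²_{A_k} / (2k)^{7/8}. -/
/-!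
Refine a partition of `[0, n)` into `k` intervals by cutting each piece `[b_i, b_{i+1})` into
blocks of length `m = ⌊n / k⌋` from its left end. By the triangle inequality the total
discrepancy can only grow, every block has width at most `1 / k`, and there are at most
`∑ ⌈len_i / m⌉ ≤ (n + k (m - 1)) / m < 2k` blocks, since `n < k (m + 1)`. For the refined
partition with widths `w_j` and discrepancies `D_j`, Cauchy–Schwarz gives
`(∑ |D_j|)² ≤ (∑ D_j² / w_j^{1/8}) · ∑ w_j^{1/8}`, and by concavity of `t ↦ t^{1/8}`,
`∑ w_j^{1/8} ≤ r^{7/8} (∑ w_j)^{1/8} = r^{7/8} ≤ (2k)^{7/8}`.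
-/

open Finset ProbabilityTheory MeasureTheory

def IsIntervalAdditive {M : Type*} [Add M] (F : ℕ → ℕ → M) : Prop :=
  ∀ a b c, a ≤ b → b ≤ c → F a b + F b c = F a c

namespace IsIntervalAdditive

variable {M : Type*} [AddCancelCommMonoid M] {F : ℕ → ℕ → M}

theorem apply_self (hF : IsIntervalAdditive F) (a : ℕ) : F a a = 0 :=
  add_eq_left.1 (hF a a a le_rfl le_rfl)

theorem sum_Ico (hF : IsIntervalAdditive F) {g : ℕ → ℕ} (hg : Monotone g) {u v : ℕ}
    (huv : u ≤ v) : ∑ l ∈ Ico u v, F (g l) (g (l + 1)) = F (g u) (g v) := by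
  induction v, huv using Nat.le_induction with
  | base => simp [hF.apply_self]
  | succ v huv ih => rw [sum_Ico_succ_top huv, ih, hF _ _ _ (hg huv) (hg v.le_succ)]

theorem sum_fin (hF : IsIntervalAdditive F) {t : ℕ} {b : Fin (t + 1) → ℕ} (hb : Monotone b) :
    ∑ i : Fin t, F (b i.castSucc) (b i.succ) = F (b 0) (b (Fin.last t)) := by
  induction t with
  | zero => simp [hF.apply_self]
  | succ t ih =>
    have hb' : Monotone fun i : Fin (t + 1) => b i.castSucc :=
      hb.comp Fin.strictMono_castSucc.monotone
    simp only [Fin.sum_univ_castSucc, Fin.succ_castSucc]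
    rw [ih hb', Fin.castSucc_zero, ← Fin.succ_last,
      hF _ _ _ (hb (Fin.zero_le _)) (hb (Fin.castSucc_le_succ _))]

end IsIntervalAdditive

theorem IsIntervalAdditive.sub {M : Type*} [AddCommGroup M] {F G : ℕ → ℕ → M}
    (hF : IsIntervalAdditive F) (hG : IsIntervalAdditive G) :
    IsIntervalAdditive fun a b => F a b - G a b := fun a b c hab hbc => by
  simp only [← hF a b c hab hbc, ← hG a b c hab hbc]; abel

theorem exists_mem_Ico_of_monotone {t : ℕ} {b : Fin (t + 1) → ℕ} (hb : Monotone b) {x : ℕ}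
    (hx₀ : b 0 ≤ x) (hx : x < b (Fin.last t)) : ∃ i : Fin t, b i.castSucc ≤ x ∧ x < b i.succ := by
  -- the indicator of `x ∈ [u, v)` is interval-additive and telescopes to `1`
  let F : ℕ → ℕ → ℕ := fun u v => if u ≤ x ∧ x < v then 1 else 0
  have hF : IsIntervalAdditive F := fun u v w _ _ => by simp only [F]; split_ifs <;> omega
  have hsum := hF.sum_fin hb
  rw [show F (b 0) (b (Fin.last t)) = 1 from if_pos ⟨hx₀, hx⟩] at hsum
  obtain ⟨i, -, hi⟩ := exists_ne_zero_of_sum_ne_zero (hsum ▸ one_ne_zero)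
  exact ⟨i, of_not_not fun h => hi (if_neg h)⟩

theorem IsIntervalAdditive.sum_abs_le_of_range_subset {F : ℕ → ℕ → ℝ}
    (hF : IsIntervalAdditive F) {k r : ℕ} {b : Fin (k + 1) → ℕ} {c : Fin (r + 1) → ℕ}
    (hb : Monotone b) (hc : StrictMono c)
    (h₀ : b 0 = c 0) (hlast : b (Fin.last k) = c (Fin.last r)) (hbc : ∀ i, ∃ j, c j = b i) :
    ∑ i : Fin k, |F (b i.castSucc) (b i.succ)| ≤ ∑ j : Fin r, |F (c j.castSucc) (c j.succ)| := by
  choose G hG using hbc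
  have hGmono : Monotone fun i => (G i : ℕ) := fun i i' h =>
    hc.le_iff_le.1 (by rw [hG, hG]; exact hb h)
  have hG₀ : G 0 = 0 := hc.injective (by rw [hG, h₀])
  have hGlast : G (Fin.last k) = Fin.last r := hc.injective (by rw [hG, hlast])
  let c' : ℕ → ℕ := fun l => c (Fin.clamp l r)
  have hc'mono : Monotone c' := fun l l' h => hc.monotone (by simp [Fin.le_def]; omega)
  have hc'c : ∀ j : Fin (r + 1), c' j = c j := fun j => congrArg c (by ext; simp; omega)
  let H : ℕ → ℕ → ℝ := fun u v => ∑ l ∈ Ico u v, |F (c' l) (c' (l + 1))|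
  have hH : IsIntervalAdditive H := fun u v w huv hvw => sum_Ico_consecutive _ huv hvw
  calc ∑ i : Fin k, |F (b i.castSucc) (b i.succ)|
      = ∑ i : Fin k, |∑ l ∈ Ico (G i.castSucc : ℕ) (G i.succ), F (c' l) (c' (l + 1))| := by
        refine sum_congr rfl fun i _ => ?_
        rw [hF.sum_Ico hc'mono (hGmono (Fin.castSucc_le_succ i)), hc'c, hc'c, hG, hG]
    _ ≤ ∑ i : Fin k, H (G i.castSucc) (G i.succ) :=
        sum_le_sum fun i _ => abs_sum_le_sum_abs _ _
    _ = H 0 r := by rw [hH.sum_fin hGmono, hG₀, hGlast, Fin.val_zero, Fin.val_last]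
    _ = ∑ j : Fin r, |F (c j.castSucc) (c j.succ)| := by
        rw [show H 0 r = ∑ l ∈ range r, |F (c' l) (c' (l + 1))| by rw [range_eq_Ico],
          ← Fin.sum_univ_eq_sum_range]
        refine sum_congr rfl fun j _ => ?_
        rw [← hc'c j.castSucc, ← hc'c j.succ]; rfl

def gridRefinement {k : ℕ} (b : Fin (k + 1) → ℕ) (m : ℕ) : Finset ℕ :=
  insert (b (Fin.last k)) (univ.biUnion fun i : Fin k =>
    (range ((b i.succ - b i.castSucc) ⌈/⌉ m)).image fun j => b i.castSucc + m * j)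

section gridRefinement

variable {k m : ℕ} {b : Fin (k + 1) → ℕ}

theorem mem_gridRefinement (hm : 0 < m) {x : ℕ} :
    x ∈ gridRefinement b m ↔ x = b (Fin.last k) ∨
      ∃ i : Fin k, ∃ j, m * j < b i.succ - b i.castSucc ∧ b i.castSucc + m * j = x := by
  have hlt : ∀ a j, j < a ⌈/⌉ m ↔ m * j < a := fun a j => by
    rw [← not_le, ceilDiv_le_iff_le_mul hm, not_le]
  simp only [gridRefinement, mem_insert, mem_biUnion, mem_univ, true_and, mem_image, mem_range,
    hlt]

theorem card_gridRefinement_le (hb : Monotone b) (hm : 0 < m) :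
    (#(gridRefinement b m) - 1) * m + k ≤ b (Fin.last k) - b 0 + k * m := by
  have hlen : ∑ i : Fin k, (b i.succ - b i.castSucc) = b (Fin.last k) - b 0 :=
    IsIntervalAdditive.sum_fin (F := fun u v => v - u) (fun _ _ _ _ _ => by dsimp only; omega) hb
  have hcard : #(gridRefinement b m) ≤ ∑ i : Fin k, (b i.succ - b i.castSucc) ⌈/⌉ m + 1 :=
    calc #(gridRefinement b m)
        ≤ #(univ.biUnion fun i : Fin k =>
            (range ((b i.succ - b i.castSucc) ⌈/⌉ m)).image fun j => b i.castSucc + m * j) + 1 :=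
          card_insert_le _ _
      _ ≤ ∑ i : Fin k, (b i.succ - b i.castSucc) ⌈/⌉ m + 1 := by
          gcongr
          exact card_biUnion_le.trans (sum_le_sum fun i _ => card_image_le.trans (card_range _).le)
  have hceil : ∀ a, a ⌈/⌉ m * m ≤ a + (m - 1) := fun a => by
    rw [Nat.ceilDiv_eq_add_pred_div, ← Nat.add_sub_assoc hm]; exact Nat.div_mul_le_self _ _
  calc (#(gridRefinement b m) - 1) * m + k
      ≤ (∑ i : Fin k, (b i.succ - b i.castSucc) ⌈/⌉ m) * m + k := by gcongr; omega
    _ ≤ ∑ i : Fin k, (b i.succ - b i.castSucc + (m - 1)) + k := by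
        rw [sum_mul]; gcongr with i; exact hceil _
    _ = b (Fin.last k) - b 0 + k * m := by
        rw [sum_add_distrib, hlen, sum_const, card_univ, Fintype.card_fin, smul_eq_mul, add_assoc,
          ← Nat.mul_succ, Nat.succ_eq_add_one, Nat.sub_one_add_one hm.ne']

theorem apply_mem_gridRefinement (hb : Monotone b) (hm : 0 < m) (i : Fin (k + 1)) :
    b i ∈ gridRefinement b m := by
  rw [mem_gridRefinement hm]
  rcases (hb (Fin.le_last i)).eq_or_lt with hi | hi
  · exact Or.inl hi
  obtain ⟨i', hi'₁, hi'₂⟩ := exists_mem_Ico_of_monotone hb (hb (Fin.zero_le i)) hi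
  have hstart : b i'.castSucc = b i := by
    refine le_antisymm hi'₁ (hb ?_)
    by_contra! h
    exact (hb (Fin.castSucc_lt_iff_succ_le.1 h)).not_gt hi'₂
  exact Or.inr ⟨i', 0, by omega, by simp [hstart]⟩

theorem le_of_mem_gridRefinement (hb : Monotone b) (hm : 0 < m) {x : ℕ}
    (hx : x ∈ gridRefinement b m) : b 0 ≤ x ∧ x ≤ b (Fin.last k) := by
  rcases (mem_gridRefinement hm).1 hx with rfl | ⟨i, j, hj, rfl⟩
  · exact ⟨hb (Fin.zero_le _), le_rfl⟩
  · have h₀ := hb (Fin.zero_le i.castSucc)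
    have hlast := hb (Fin.le_last i.succ)
    omega

theorem exists_mem_gridRefinement_le_add (hb : Monotone b) (hm : 0 < m) {x : ℕ}
    (hx : x ∈ gridRefinement b m) (hxlast : x < b (Fin.last k)) :
    ∃ y ∈ gridRefinement b m, x < y ∧ y ≤ x + m := by
  rcases (mem_gridRefinement hm).1 hx with rfl | ⟨i, j, hj, rfl⟩
  · exact absurd hxlast (lt_irrefl _)
  by_cases hnext : m * (j + 1) < b i.succ - b i.castSucc
  · refine ⟨_, (mem_gridRefinement hm).2 (Or.inr ⟨i, j + 1, hnext, rfl⟩), ?_, ?_⟩ <;>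
      · rw [mul_add, mul_one]; omega
  · exact ⟨b i.succ, apply_mem_gridRefinement hb hm _, by omega, by rw [mul_add] at hnext; omega⟩

end gridRefinement

theorem Finset.exists_strictMono_enum_of_gap_le (S : Finset ℕ) {a n m : ℕ} (ha : a ∈ S)
    (hn : n ∈ S) (hS : ∀ x ∈ S, a ≤ x ∧ x ≤ n)
    (hgap : ∀ x ∈ S, x < n → ∃ y ∈ S, x < y ∧ y ≤ x + m) :
    ∃ r, ∃ c : Fin (r + 1) → ℕ, r + 1 = #S ∧ StrictMono c ∧ c 0 = a ∧ c (Fin.last r) = n ∧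
      (∀ x ∈ S, ∃ j, c j = x) ∧ ∀ j : Fin r, c j.succ ≤ c j.castSucc + m := by
  have hcard : #S = #S - 1 + 1 := (Nat.sub_one_add_one (card_ne_zero_of_mem ha)).symm
  set c := S.orderEmbOfFin hcard
  have hsurj : ∀ x ∈ S, ∃ j, c j = x := fun x hx => by
    rwa [← Set.mem_range, range_orderEmbOfFin]
  have hlast : c (Fin.last _) = n := (orderEmbOfFin_last hcard (Nat.succ_pos _)).trans
    (le_antisymm ((hS _ (max'_mem _ _)).2) (le_max' _ _ hn))
  refine ⟨#S - 1, c, hcard.symm, c.strictMono, ?_, hlast, hsurj, fun j => ?_⟩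
  · rw [← Fin.mk_zero, orderEmbOfFin_zero hcard]
    exact le_antisymm (min'_le _ _ ha) ((hS _ (min'_mem _ _)).1)
  · have hjn : c j.castSucc < n := hlast ▸ c.strictMono (Fin.castSucc_lt_last j)
    obtain ⟨y, hy, hjy, hym⟩ := hgap _ (orderEmbOfFin_mem _ _ _) hjn
    obtain ⟨l, rfl⟩ := hsurj y hy
    exact (c.monotone (Fin.castSucc_lt_iff_succ_le.1 (c.lt_iff_lt.1 hjy))).trans hym

theorem exists_strictMono_refinement {k m : ℕ} {b : Fin (k + 1) → ℕ} (hb : Monotone b)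
    (hm : 0 < m) :
    ∃ r, ∃ c : Fin (r + 1) → ℕ, StrictMono c ∧ c 0 = b 0 ∧ c (Fin.last r) = b (Fin.last k) ∧
      (∀ i, ∃ j, c j = b i) ∧ (∀ j : Fin r, c j.succ ≤ c j.castSucc + m) ∧
      r * m + k ≤ b (Fin.last k) - b 0 + k * m := by
  obtain ⟨r, c, hr, hc, hc₀, hclast, hsurj, hgap⟩ :=
    (gridRefinement b m).exists_strictMono_enum_of_gap_le (apply_mem_gridRefinement hb hm 0)
      (apply_mem_gridRefinement hb hm _) (fun _ => le_of_mem_gridRefinement hb hm)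
      (fun _ => exists_mem_gridRefinement_le_add hb hm)
  refine ⟨r, c, hc, hc₀, hclast, fun i => hsurj _ (apply_mem_gridRefinement hb hm i), hgap, ?_⟩
  simpa [← hr] using card_gridRefinement_le hb hm

theorem Real.sum_rpow_le_card_rpow_mul_rpow_sum {ι : Type*} (s : Finset ι) {w : ι → ℝ}
    (hw : ∀ i ∈ s, 0 ≤ w i) {p : ℝ} (hp₀ : 0 < p) (hp₁ : p ≤ 1) :
    ∑ i ∈ s, w i ^ p ≤ (#s : ℝ) ^ (1 - p) * (∑ i ∈ s, w i) ^ p := by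
  have hwp : ∀ i ∈ s, 0 ≤ w i ^ p := fun i hi => rpow_nonneg (hw i hi) p
  have h := rpow_sum_le_const_mul_sum_rpow_of_nonneg s (one_le_one_div hp₀ hp₁) hwp
  rw [sum_congr rfl fun i hi => show (w i ^ p) ^ (1 / p) = w i by
    rw [← rpow_mul (hw i hi), mul_one_div_cancel hp₀.ne', rpow_one]] at h
  calc ∑ i ∈ s, w i ^ p
      = ((∑ i ∈ s, w i ^ p) ^ (1 / p)) ^ p := by
        rw [← rpow_mul (sum_nonneg hwp), one_div_mul_cancel hp₀.ne', rpow_one]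
    _ ≤ ((#s : ℝ) ^ (1 / p - 1) * ∑ i ∈ s, w i) ^ p :=
        rpow_le_rpow (rpow_nonneg (sum_nonneg hwp) _) h hp₀.le
    _ = (#s : ℝ) ^ (1 - p) * (∑ i ∈ s, w i) ^ p := by
        rw [mul_rpow (rpow_nonneg (Nat.cast_nonneg _) _) (sum_nonneg hw),
          ← rpow_mul (Nat.cast_nonneg _), sub_mul, one_div_mul_cancel hp₀.ne', one_mul]

theorem sq_sum_abs_le_sum_sq_div_rpow_mul {ι : Type*} (s : Finset ι) (x : ι → ℝ) {w : ι → ℝ}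
    (hw : ∀ i ∈ s, 0 < w i) {p : ℝ} (hp₀ : 0 < p) (hp₁ : p ≤ 1) :
    (∑ i ∈ s, |x i|) ^ 2
      ≤ (∑ i ∈ s, x i ^ 2 / w i ^ p) * ((#s : ℝ) ^ (1 - p) * (∑ i ∈ s, w i) ^ p) := by
  calc (∑ i ∈ s, |x i|) ^ 2
      ≤ (∑ i ∈ s, x i ^ 2 / w i ^ p) * ∑ i ∈ s, w i ^ p := by
        refine sum_sq_le_sum_mul_sum_of_sq_le_mul _ (fun i hi => by have := hw i hi; positivity)
          (fun i hi => Real.rpow_nonneg (hw i hi).le _) fun i hi => ?_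
        rw [sq_abs, div_mul_cancel₀ _ (Real.rpow_pos_of_pos (hw i hi) _).ne']
    _ ≤ _ := by
        gcongr
        · exact sum_nonneg fun i hi => by have := hw i hi; positivity
        · exact Real.sum_rpow_le_card_rpow_mul_rpow_sum s (fun i hi => (hw i hi).le) hp₀ hp₁

section intervalMass

variable {n : ℕ}

theorem isIntervalAdditive_intervalMass (q : Fin n → ℝ) : IsIntervalAdditive (intervalMass q) :=
  fun a b c hab hbc => by
    rw [intervalMass, intervalMass, intervalMass,
      ← sum_union (disjoint_filter.2 fun j _ h₁ h₂ => by omega)]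
    congr 1
    ext j
    simp only [mem_union, mem_filter, mem_univ, true_and]
    omega

theorem intervalMass_zero_self (q : Fin n → ℝ) : intervalMass q 0 n = ∑ i, q i := by
  rw [intervalMass, filter_true_of_mem fun j _ => ⟨j.val.zero_le, j.isLt⟩]

theorem intervalMass_nonneg {q : Fin n → ℝ} (hq : ∀ i, 0 ≤ q i) (a b : ℕ) :
    0 ≤ intervalMass q a b :=
  sum_nonneg fun i _ => hq i

theorem intervalMass_unif {a b : ℕ} (hb : b ≤ n) :
    intervalMass (unif n) a b = ((b - a : ℕ) : ℝ) / n := by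
  have hcard : (univ.filter fun j : Fin n => a ≤ (j : ℕ) ∧ (j : ℕ) < b).map Fin.valEmbedding =
      Ico a b := by
    ext x
    simp only [mem_map, mem_filter, mem_univ, true_and, Fin.valEmbedding_apply, mem_Ico]
    exact ⟨by rintro ⟨j, hj, rfl⟩; exact hj, fun hx => ⟨⟨x, by omega⟩, hx, rfl⟩⟩
  simp only [intervalMass, unif]
  rw [sum_const, ← card_map, hcard, Nat.card_Ico, nsmul_eq_mul, mul_one_div]

end intervalMass

theorem unif_nonneg (n : ℕ) (i : Fin n) : 0 ≤ unif n i := by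
  unfold unif; positivity

theorem ssTerm_nonneg {n : ℕ} (q : Fin n → ℝ) (a b : ℕ) : 0 ≤ ssTerm q a b := by
  unfold ssTerm; positivity

section ssTerm

variable {n : ℕ} {q : Fin n → ℝ}

theorem ssTerm_le (hq : ∀ i, 0 ≤ q i) {a b : ℕ} (hab : a < b) (hbn : b ≤ n) :
    ssTerm q a b ≤ n * (intervalMass q a b + intervalMass (unif n) a b) ^ 2 := by
  have hn : (0 : ℝ) < n := by norm_cast; omega
  have hlen : (1 : ℝ) ≤ (b - a : ℕ) := by norm_cast; omega
  have hw₀ : 1 / (n : ℝ) ≤ ((b - a : ℕ) : ℝ) / n := by gcongr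
  have hw₁ : ((b - a : ℕ) : ℝ) / n ≤ 1 := by
    rw [div_le_one hn]; norm_cast; omega
  have hw : 1 / (n : ℝ) ≤ (((b - a : ℕ) : ℝ) / n) ^ ((1 : ℝ) / 8) :=
    hw₀.trans (Real.self_le_rpow_of_le_one (by positivity) hw₁ (by norm_num))
  have hM := intervalMass_nonneg hq a b
  have hw_nonneg : (0 : ℝ) ≤ ((b - a : ℕ) : ℝ) / n := by positivity
  unfold ssTerm
  rw [intervalMass_unif hbn]
  calc |intervalMass q a b - ((b - a : ℕ) : ℝ) / n| ^ 2 / (((b - a : ℕ) : ℝ) / n) ^ ((1 : ℝ) / 8)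
      ≤ (intervalMass q a b + ((b - a : ℕ) : ℝ) / n) ^ 2 / (1 / n) := by
        gcongr
        exact abs_le.2 ⟨by linarith, by linarith⟩
    _ = n * (intervalMass q a b + ((b - a : ℕ) : ℝ) / n) ^ 2 := by field_simp

theorem sum_ssTerm_le_four_mul (hq : IsDist q) {r : ℕ} {c : Fin (r + 1) → ℕ} (hc : StrictMono c)
    (hc₀ : c 0 = 0) (hclast : c (Fin.last r) = n) :
    ∑ j : Fin r, ssTerm q (c j.castSucc) (c j.succ) ≤ 4 * n := by
  set mass := fun j : Fin r =>
    intervalMass q (c j.castSucc) (c j.succ) + intervalMass (unif n) (c j.castSucc) (c j.succ)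
  have hmass : ∀ j, 0 ≤ mass j := fun j =>
    add_nonneg (intervalMass_nonneg hq.1 _ _) (intervalMass_nonneg (unif_nonneg n) _ _)
  have hsum : ∑ j, mass j ≤ 2 := by
    rw [sum_add_distrib, (isIntervalAdditive_intervalMass q).sum_fin hc.monotone,
      (isIntervalAdditive_intervalMass _).sum_fin hc.monotone, hc₀, hclast,
      intervalMass_zero_self, hq.2, intervalMass_unif le_rfl, ← one_add_one_eq_two]
    gcongr
    exact div_le_one_of_le₀ (by simp) (Nat.cast_nonneg _)
  calc ∑ j : Fin r, ssTerm q (c j.castSucc) (c j.succ)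
      ≤ ∑ j, n * mass j ^ 2 := sum_le_sum fun j _ =>
        ssTerm_le hq.1 (hc Fin.castSucc_lt_succ) (hclast ▸ hc.monotone (Fin.le_last _))
    _ ≤ n * (∑ j, mass j) ^ 2 := by
        rw [← mul_sum]; gcongr; exact sum_sq_le_sq_sum_of_nonneg fun j _ => hmass j
    _ ≤ n * 2 ^ 2 := by gcongr; exact sum_nonneg fun j _ => hmass j
    _ = 4 * n := by ring

end ssTerm

section ssDistSq

variable {n k : ℕ} {q : Fin n → ℝ}

theorem ssDistSq_nonneg (n k : ℕ) (q : Fin n → ℝ) : 0 ≤ ssDistSq n k q :=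
  Real.sSup_nonneg <| by
    rintro _ ⟨r, c, -, -, -, -, rfl⟩
    exact sum_nonneg fun j _ => ssTerm_nonneg q _ _

theorem sum_ssTerm_le_ssDistSq (hq : IsDist q) {r : ℕ} {c : Fin (r + 1) → ℕ} (hc : StrictMono c)
    (hc₀ : c 0 = 0) (hclast : c (Fin.last r) = n)
    (hwidth : ∀ j : Fin r, ((c j.succ - c j.castSucc : ℕ) : ℝ) / n ≤ 1 / k) :
    ∑ j : Fin r, ssTerm q (c j.castSucc) (c j.succ) ≤ ssDistSq n k q := by
  refine le_csSup ⟨4 * n, ?_⟩ ⟨r, c, hc, hc₀, hclast, hwidth, rfl⟩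
  rintro _ ⟨r, c, hc, hc₀, hclast, -, rfl⟩
  exact sum_ssTerm_le_four_mul hq hc hc₀ hclast

theorem sq_sum_abs_sub_unif_le_sum_ssTerm_mul (hn : 0 < n) {r : ℕ} {c : Fin (r + 1) → ℕ}
    (hc : StrictMono c) (hc₀ : c 0 = 0) (hclast : c (Fin.last r) = n) :
    (∑ j : Fin r, |intervalMass q (c j.castSucc) (c j.succ)
        - intervalMass (unif n) (c j.castSucc) (c j.succ)|) ^ 2
      ≤ (∑ j : Fin r, ssTerm q (c j.castSucc) (c j.succ)) * (r : ℝ) ^ ((7 : ℝ) / 8) := by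
  have hw : ∀ j : Fin r,
      intervalMass (unif n) (c j.castSucc) (c j.succ) = ((c j.succ - c j.castSucc : ℕ) : ℝ) / n :=
    fun j => intervalMass_unif (hclast ▸ hc.monotone (Fin.le_last _))
  have hw_pos : ∀ j ∈ (univ : Finset (Fin r)),
      0 < intervalMass (unif n) (c j.castSucc) (c j.succ) := fun j _ => by
    rw [hw]
    have := hc (Fin.castSucc_lt_succ (i := j))
    exact div_pos (by norm_cast; omega) (by exact_mod_cast hn)
  have hw_sum : ∑ j : Fin r, intervalMass (unif n) (c j.castSucc) (c j.succ) = 1 := by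
    rw [(isIntervalAdditive_intervalMass _).sum_fin hc.monotone, hc₀, hclast,
      intervalMass_unif le_rfl, Nat.sub_zero, div_self (by exact_mod_cast hn.ne')]
  have := sq_sum_abs_le_sum_sq_div_rpow_mul univ (fun j : Fin r =>
    intervalMass q (c j.castSucc) (c j.succ) - intervalMass (unif n) (c j.castSucc) (c j.succ))
    hw_pos (p := 1 / 8) (by norm_num) (by norm_num)
  rw [hw_sum, Real.one_rpow, mul_one, card_univ, Fintype.card_fin] at this
  refine this.trans_eq (congrArg₂ _ (sum_congr rfl fun j _ => ?_) (by norm_num))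
  unfold ssTerm
  rw [sq_abs, hw]

end ssDistSq

theorem sq_sum_abs_sub_unif_le_ssDistSq {n k : ℕ} (hk : 0 < k) (hkn : k ≤ n) {q : Fin n → ℝ}
    (hq : IsDist q) {b : Fin (k + 1) → ℕ} (hb : Monotone b) (hb₀ : b 0 = 0)
    (hblast : b (Fin.last k) = n) :
    (∑ i : Fin k, |intervalMass q (b i.castSucc) (b i.succ)
        - intervalMass (unif n) (b i.castSucc) (b i.succ)|) ^ 2
      ≤ ssDistSq n k q * (2 * (k : ℝ)) ^ ((7 : ℝ) / 8) := by
  have hn : n < k * (n / k) + k := by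
    have := Nat.div_add_mod n k; have := Nat.mod_lt n hk; omega
  have hkm : k * (n / k) ≤ n := Nat.mul_div_le n k
  set m := n / k
  have hm : 0 < m := Nat.div_pos hkn hk
  obtain ⟨r, c, hc, hc₀, hclast, hbc, hgap, hr⟩ := exists_strictMono_refinement hb hm
  rw [hb₀] at hc₀ hr
  rw [hblast, Nat.sub_zero] at hr
  rw [hblast] at hclast
  have hr2k : r ≤ 2 * k := by
    have : r * m < 2 * k * m := by rw [mul_assoc, two_mul]; omega
    exact (Nat.lt_of_mul_lt_mul_right this).le
  have hwidth : ∀ j : Fin r, ((c j.succ - c j.castSucc : ℕ) : ℝ) / n ≤ 1 / k := fun j => by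
    have hlen : (c j.succ - c j.castSucc) * k ≤ n :=
      (Nat.mul_le_mul_right k (show c j.succ - c j.castSucc ≤ m by have := hgap j; omega)).trans
        (by rw [mul_comm]; exact hkm)
    rw [div_le_div_iff₀ (by norm_cast; omega) (by norm_cast), one_mul]
    exact_mod_cast hlen
  have hD := IsIntervalAdditive.sub (isIntervalAdditive_intervalMass q)
    (isIntervalAdditive_intervalMass (unif n))
  calc _ ≤ (∑ j : Fin r, |intervalMass q (c j.castSucc) (c j.succ)
          - intervalMass (unif n) (c j.castSucc) (c j.succ)|) ^ 2 :=
        pow_le_pow_left₀ (sum_nonneg fun i _ => abs_nonneg _)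
          (hD.sum_abs_le_of_range_subset hb hc (hb₀.trans hc₀.symm) (hblast.trans hclast.symm)
            hbc) 2
    _ ≤ (∑ j : Fin r, ssTerm q (c j.castSucc) (c j.succ)) * (r : ℝ) ^ ((7 : ℝ) / 8) :=
        sq_sum_abs_sub_unif_le_sum_ssTerm_mul (by omega) hc hc₀ hclast
    _ ≤ ssDistSq n k q * (2 * (k : ℝ)) ^ ((7 : ℝ) / 8) := by
        gcongr
        · exact ssDistSq_nonneg n k q
        · exact sum_ssTerm_le_ssDistSq hq hc hc₀ hclast hwidth
        · exact_mod_cast hr2k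

/-- **Lemma: the scale-sensitive-`L2` distance dominates the `A_k` distance:**
`‖q - U_n‖²_{[k]} ≥ ‖q - U_n‖²_{A_k} / (2k)^{7/8}`. -/
theorem scale_sensitive_ge_Ak (n k : ℕ) (hk2 : 2 ≤ k) (hkn : k ≤ n)
    (q : Fin n → ℝ) (hq : IsDist q) :
    AkDist n k q (unif n) ^ 2 / (2 * (k : ℝ)) ^ ((7 : ℝ) / 8) ≤ ssDistSq n k q := by
  have hC : 0 < (2 * (k : ℝ)) ^ ((7 : ℝ) / 8) := by positivity
  have hAk₀ : 0 ≤ AkDist n k q (unif n) :=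
    Real.sSup_nonneg (by rintro _ ⟨b, -, -, -, rfl⟩; positivity)
  have hAk : AkDist n k q (unif n) ≤ √(ssDistSq n k q * (2 * (k : ℝ)) ^ ((7 : ℝ) / 8)) :=
    Real.sSup_le (by
      rintro _ ⟨b, hb, hb₀, hblast, rfl⟩
      exact Real.le_sqrt_of_sq_le
        (sq_sum_abs_sub_unif_le_ssDistSq (by omega) hkn hq hb hb₀ hblast))
      (Real.sqrt_nonneg _)
  rw [div_le_iff₀ hC]
  exact (Real.le_sqrt hAk₀ (mul_nonneg (ssDistSq_nonneg n k q) hC.le)).1 hAk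
end
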